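/- arXiv:2511.04378 — 4 statements merged into one kernel-verified Lean document; each statement's English description precedes it below -/
import Mathlib

section
/- Define a relation ⪯_r on pairs (I,γ) ∈ P(ℤ/fℤ) × Ñ by: (I',γ') ⪯_r (I,γ) iff γ' ⪯ γ (digitwise) and I' ⊆ I ∪ I(r−2γ, 2(γ∸γ')) ∪ I(γ∸γ', γ∸γ'). Then ⪯_r is a partial order; transitivity follows from the multiset identity of carry sets I(ε_2,ε_3) ∪ I(ε_4,ε_5) ∪ I(ε_1, ε_2+ε_3) ∪ I(ε_1+ε_2+ε_3, ε_4+ε_5) = I(ε_2+ε_4, ε_3+ε_5) ∪ I(ε_1, ε_2+ε_3+ε_4+ε_5) whenever I(ε_2,ε_4) = I(ε_3,ε_5) = ∅. -/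
/-- The `i`-th base-`p` digit of `a`, with the digit positions indexed cyclically by
`ℤ/fℤ`. -/
def digitZ (p f : ℕ) (a : ℕ) (i : ZMod f) : ℕ := a / p ^ i.val % p

/-- Addition in the exponent monoid `Ñ = {0} ∪ ℤ/(q−1)ℤ`, computed on the canonical
representatives in `{0, …, q−1}`. -/
def nadd (q a b : ℕ) : ℕ := if a + b = 0 then 0 else (a + b - 1) % (q - 1) + 1

/-- The defining conditions for the carry set `I(α,β) ⊆ ℤ/fℤ` of the base-`p` addition
of `α` and `β` in `Ñ` (Lemma on carry sets). -/
def CarrySetSpec (p f : ℕ) (a b : ℕ) (I : Finset (ZMod f)) : Prop :=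
  (∀ i : ZMod f, i - 1 ∉ I → i ∉ I → digitZ p f a i + digitZ p f b i ≤ p - 1) ∧
  (∀ i : ZMod f, i - 1 ∈ I → i ∉ I → digitZ p f a i + digitZ p f b i ≤ p - 2) ∧
  (∀ i : ZMod f, i - 1 ∉ I → i ∈ I → p ≤ digitZ p f a i + digitZ p f b i) ∧
  (∀ i : ZMod f, i - 1 ∈ I → i ∈ I → p - 1 ≤ digitZ p f a i + digitZ p f b i) ∧
  ((∀ i : ZMod f, digitZ p f a i + digitZ p f b i = p - 1) → I = ∅)

open Classical in
/-- The carry set `I(α,β)`: the (unique, under the standing hypotheses) set satisfying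
`CarrySetSpec`. -/
noncomputable def carrySet (p f a b : ℕ) : Finset (ZMod f) :=
  if h : ∃ I : Finset (ZMod f), CarrySetSpec p f a b I then h.choose else ∅

/-- The representative in `{1, …, q−1}` of a class in `ℤ/(q−1)ℤ ≅ Ñ∖{0}`. -/
def grpRep (q : ℕ) (x : ℤ) : ℕ := ((x - 1) % ((q : ℤ) - 1)).toNat + 1

/-- The digitwise partial order `⪯` on `Ñ` (on canonical representatives). -/
def dle (p f : ℕ) (a b : ℕ) : Prop := ∀ i : ZMod f, digitZ p f a i ≤ digitZ p f b i

/-- The relation `⪯_r` on types `(I, γ) ∈ P(ℤ/fℤ) × Ñ`: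
`(I',γ') ⪯_r (I,γ)` iff `γ' ⪯ γ` and
`I' ⊆ I ∪ I(r−2γ, 2(γ∸γ')) ∪ I(γ∸γ', γ∸γ')`. -/
def typeLe (p f q r : ℕ) (x y : Finset (ZMod f) × ℕ) : Prop :=
  dle p f x.2 y.2 ∧
    x.1 ⊆ y.1 ∪ carrySet p f (grpRep q ((r : ℤ) - 2 * y.2)) (nadd q (y.2 - x.2) (y.2 - x.2))
            ∪ carrySet p f (y.2 - x.2) (y.2 - x.2)

namespace Aux

variable {p f : ℕ}

/-- digit as ℕ-indexed -/
def dig (p : ℕ) (a i : ℕ) : ℕ := a / p ^ i % p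

lemma digitZ_eq (a : ℕ) (i : ZMod f) : digitZ p f a i = dig p a i.val := rfl

lemma dig_lt (hp : 1 < p) (a i : ℕ) : dig p a i < p := Nat.mod_lt _ (by omega)

/-- a % p^n = Σ_{i<n} dig a i * p^i -/
lemma mod_pow_eq_sum (a n : ℕ) : a % p ^ n = ∑ i ∈ Finset.range n, dig p a i * p ^ i := by
  induction n with
  | zero => simp [Nat.mod_one]
  | succ n ih =>
    rw [Nat.mod_pow_succ, Finset.sum_range_succ, ih, dig]
    ring

lemma sum_digits (hf : a < p ^ f) : ∑ i ∈ Finset.range f, dig p a i * p ^ i = a := by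
  rw [← mod_pow_eq_sum, Nat.mod_eq_of_lt hf]

lemma sum_lt_pow (hp : 1 < p) {g : ℕ → ℕ} {n : ℕ} (hg : ∀ i < n, g i ≤ p - 1) :
    ∑ i ∈ Finset.range n, g i * p ^ i < p ^ n := by
  induction n with
  | zero => simp
  | succ n ih =>
    rw [Finset.sum_range_succ, pow_succ]
    have h1 : ∑ i ∈ Finset.range n, g i * p ^ i < p ^ n :=
      ih (fun i hi => hg i (by omega))
    have h2 : g n ≤ p - 1 := hg n (by omega)
    have : g n * p ^ n ≤ (p - 1) * p ^ n := Nat.mul_le_mul_right _ h2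
    have hpn : 0 < p ^ n := Nat.pow_pos (by omega)
    nlinarith [Nat.sub_add_cancel (le_of_lt hp)]

/-- digit extraction from sums -/
lemma dig_sum (hp : 1 < p) {g : ℕ → ℕ} {n : ℕ} (hg : ∀ i < n, g i < p) {k : ℕ} (hk : k < n) :
    dig p (∑ i ∈ Finset.range n, g i * p ^ i) k = g k := by
  -- split range n into [0,k), {k}, [k+1, n)
  obtain ⟨m, hm⟩ : ∃ m, n - k = m + 1 := ⟨n - k - 1, by omega⟩
  have hsplit : ∑ i ∈ Finset.range n, g i * p ^ i
      = (∑ i ∈ Finset.range k, g i * p ^ i) + p ^ k * (g k + p * ∑ i ∈ Finset.range m, g (k + (i + 1)) * p ^ i) := by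
    have h1 : n = k + (m + 1) := by omega
    rw [h1, Finset.sum_range_add, Finset.sum_range_succ']
    congr 1
    rw [mul_add, Finset.mul_sum, add_comm (p ^ k * g k)]
    congr 1
    · rw [Finset.mul_sum]
      apply Finset.sum_congr rfl
      intro i _
      rw [pow_add, pow_succ]
      ring
    · simp [mul_comm]
  have hlo : (∑ i ∈ Finset.range k, g i * p ^ i) < p ^ k :=
    sum_lt_pow hp (fun i hi => by have := hg i (by omega); omega)
  rw [hsplit, dig]
  rw [Nat.add_mul_div_left _ _ (Nat.pow_pos (by omega)) ]
  rw [Nat.div_eq_of_lt hlo]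
  rw [zero_add, Nat.add_mul_mod_self_left, Nat.mod_eq_of_lt (hg k hk)]


variable {p f : ℕ} [NeZero f]

lemma zcast (i : ZMod f) : ((i.val : ℕ) : ZMod f) = i := ZMod.natCast_rightInverse i

/-- digit sum -/
def dS (p f a b : ℕ) (i : ZMod f) : ℕ := digitZ p f a i + digitZ p f b i

open Classical in
/-- explicit carry set -/
noncomputable def Eset (p f a b : ℕ) [NeZero f] : Finset (ZMod f) :=
  Finset.univ.filter (fun i => ∃ k, k < f ∧ p ≤ dS p f a b (i - (k : ℕ)) ∧
    ∀ j < k, dS p f a b (i - (j : ℕ)) = p - 1)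

lemma mem_Eset {a b : ℕ} {i : ZMod f} :
    i ∈ Eset p f a b ↔ ∃ k, k < f ∧ p ≤ dS p f a b (i - (k : ℕ)) ∧
      ∀ j < k, dS p f a b (i - (j : ℕ)) = p - 1 := by
  classical
  simp [Eset]

lemma Eset_spec (hp : 2 ≤ p) (a b : ℕ) : CarrySetSpec p f a b (Eset p f a b) := by
  have hf : 0 < f := Nat.pos_of_ne_zero (NeZero.ne f)
  refine ⟨?_, ?_, ?_, ?_, ?_⟩
  · -- i-1 ∉ E, i ∉ E : S i ≤ p-1
    intro i _ hi
    by_contra h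
    apply hi
    refine mem_Eset.2 ⟨0, hf, ?_, by omega⟩
    have h0 : i - ((0:ℕ):ZMod f) = i := by push_cast; ring
    rw [h0]
    simp only [dS]
    omega
  · -- i-1 ∈ E, i ∉ E : S i ≤ p-2
    intro i hi1 hi
    rcases mem_Eset.1 hi1 with ⟨k, hk, hS, hchain⟩
    by_contra h
    simp only [dS] at hS hchain
    -- S i ≥ p-1. If S i ≥ p then i ∈ E with k = 0.
    have h1 : digitZ p f a i + digitZ p f b i ≤ p - 1 := by
      by_contra h2
      apply hi
      refine mem_Eset.2 ⟨0, hf, ?_, by omega⟩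
      have h0 : i - ((0:ℕ):ZMod f) = i := by push_cast; ring
      rw [h0]
      simp only [dS]
      omega
    have hSi : digitZ p f a i + digitZ p f b i = p - 1 := by omega
    -- then i ∈ E with k+1; k+1 < f since otherwise i - (k+1) = i has S ≥ p
    have hk1 : k + 1 < f := by
      rcases Nat.lt_or_ge (k+1) f with h'|h'
      · exact h'
      · exfalso
        have hkf : k + 1 = f := by omega
        have : i - 1 - (k : ZMod f) = i := by
          have : ((k : ℕ) : ZMod f) + 1 = ((f : ℕ) : ZMod f) := by
            rw [← hkf]; push_cast; ring
          rw [sub_sub, add_comm (1 : ZMod f), this, ZMod.natCast_self, sub_zero]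
        rw [this] at hS
        omega
    apply hi
    refine mem_Eset.2 ⟨k + 1, hk1, ?_, ?_⟩
    · have heq : i - ((k + 1 : ℕ) : ZMod f) = i - 1 - (k : ℕ) := by push_cast; ring
      rw [heq]
      simp only [dS]
      exact hS
    · intro j hj
      rcases Nat.eq_zero_or_pos j with rfl | hj0
      · have h0 : i - ((0:ℕ):ZMod f) = i := by push_cast; ring
        rw [h0]
        simp only [dS]
        omega
      · have heq : i - (j : ℕ) = i - 1 - ((j - 1 : ℕ) : ZMod f) := by
          have hj1 : ((j : ℕ) : ZMod f) = ((j - 1 : ℕ) : ZMod f) + 1 := by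
            conv_lhs => rw [show j = (j-1) + 1 by omega]
            push_cast
            ring
          rw [hj1, sub_sub]
          ring_nf
        rw [heq]
        simp only [dS]
        exact hchain (j-1) (by omega)
  · -- i-1 ∉ E, i ∈ E : S i ≥ p
    intro i hi1 hi
    rcases mem_Eset.1 hi with ⟨k, hk, hS, hchain⟩
    rcases Nat.eq_zero_or_pos k with rfl | hk0
    · have h0 : i - ((0:ℕ):ZMod f) = i := by push_cast; ring
      rw [h0] at hS
      simpa [dS] using hS
    · exfalso
      apply hi1
      refine mem_Eset.2 ⟨k - 1, by omega, ?_, ?_⟩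
      · have heq : i - 1 - ((k - 1 : ℕ) : ZMod f) = i - (k : ℕ) := by
          have hh : ((k : ℕ) : ZMod f) = ((k - 1 : ℕ) : ZMod f) + 1 := by
            conv_lhs => rw [show k = (k-1) + 1 by omega]
            push_cast
            ring
          rw [hh, sub_sub]
          ring_nf
        rwa [heq]
      · intro j hj
        have heq : i - 1 - (j : ℕ) = i - ((j + 1 : ℕ) : ZMod f) := by
          push_cast; ring
        rw [heq]
        exact hchain (j+1) (by omega)
  · -- i-1 ∈ E, i ∈ E : S i ≥ p - 1
    intro i _ hi
    rcases mem_Eset.1 hi with ⟨k, hk, hS, hchain⟩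
    rcases Nat.eq_zero_or_pos k with rfl | hk0
    · have h0 : i - ((0:ℕ):ZMod f) = i := by push_cast; ring
      rw [h0] at hS
      simp only [dS] at hS
      omega
    · have hch := hchain 0 hk0
      have h0 : i - ((0:ℕ):ZMod f) = i := by push_cast; ring
      rw [h0] at hch
      simp only [dS] at hch
      omega
  · -- all S = p-1 : E = ∅
    intro hall
    ext i
    simp only [Finset.notMem_empty, iff_false]
    intro hi
    rcases mem_Eset.1 hi with ⟨k, _, hS, _⟩
    have := hall (i - (k : ℕ))
    simp only [dS] at hS
    omega

lemma spec_subset (hp : 2 ≤ p) {a b : ℕ} {I I' : Finset (ZMod f)}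
    (h : CarrySetSpec p f a b I) (h' : CarrySetSpec p f a b I') : I ⊆ I' := by
  obtain ⟨h1, h2, h3, h4, h5⟩ := h
  obtain ⟨h1', h2', h3', h4', h5'⟩ := h'
  intro i hi
  by_contra hi'
  -- key step: j ∈ I \ I' → j - 1 ∈ I \ I'
  have key : ∀ j : ZMod f, j ∈ I → j ∉ I' → (j - 1 ∈ I ∧ j - 1 ∉ I') := by
    intro j hj hj'
    have hA : j - 1 ∉ I' := by
      intro hmem
      have := h2' j hmem hj'
      have := h4 j
      by_cases hc : j - 1 ∈ I
      · have := h4 j hc hj; omega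
      · have := h3 j hc hj; omega
    have hB : j - 1 ∈ I := by
      by_contra hc
      have := h3 j hc hj
      have := h1' j hA hj'
      omega
    exact ⟨hB, hA⟩
  have chain : ∀ k : ℕ, (i - (k : ℕ)) ∈ I ∧ (i - (k : ℕ)) ∉ I' := by
    intro k
    induction k with
    | zero => simpa using ⟨hi, hi'⟩
    | succ k ih =>
      have := key _ ih.1 ih.2
      have heq : i - ((k + 1 : ℕ) : ZMod f) = i - (k : ℕ) - 1 := by push_cast; ring
      rw [heq]
      exact this
  have hallI : ∀ j : ZMod f, j ∈ I ∧ j ∉ I' := by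
    intro j
    obtain ⟨k, hk⟩ : ∃ k : ℕ, i - (k : ZMod f) = j := ⟨(i - j).val, by rw [zcast]; ring⟩
    rw [← hk]
    exact chain k
  have hall : ∀ j : ZMod f, digitZ p f a j + digitZ p f b j = p - 1 := by
    intro j
    have hj := hallI j
    have hj1 := hallI (j - 1)
    have := h4 j hj1.1 hj.1
    have := h1' j hj1.2 hj.2
    omega
  have := h5 hall
  rw [this] at hallI
  simpa using (hallI i).1
  
lemma spec_unique (hp : 2 ≤ p) {a b : ℕ} {I I' : Finset (ZMod f)}
    (h : CarrySetSpec p f a b I) (h' : CarrySetSpec p f a b I') : I = I' :=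
  Finset.Subset.antisymm (spec_subset hp h h') (spec_subset hp h' h)


/-- normalization of a representative -/
def norm (q s : ℕ) : ℕ := if s = 0 then 0 else (s - 1) % (q - 1) + 1

lemma nadd_eq_norm (q a b : ℕ) : nadd q a b = norm q (a + b) := rfl

lemma norm_le (q s : ℕ) (hq : 2 ≤ q) : norm q s ≤ q - 1 := by
  unfold norm
  split
  · omega
  · have : (s - 1) % (q - 1) < q - 1 := Nat.mod_lt _ (by omega)
    omega

lemma norm_eq_zero_iff (q s : ℕ) : norm q s = 0 ↔ s = 0 := by
  unfold norm
  split <;> omega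

lemma norm_eq_self (q s : ℕ) (hq : 2 ≤ q) (hs : s ≤ q - 1) : norm q s = s := by
  unfold norm
  split
  · omega
  · rw [Nat.mod_eq_of_lt (by omega)]
    omega

lemma norm_spec (q s : ℕ) : ∃ t, s = norm q s + (q - 1) * t := by
  unfold norm
  split
  · exact ⟨0, by omega⟩
  · refine ⟨(s - 1) / (q - 1), ?_⟩
    have := Nat.div_add_mod (s - 1) (q - 1)
    omega

lemma norm_congr (q s s' : ℕ) (h : s % (q - 1) = s' % (q - 1)) (h0 : s = 0 ↔ s' = 0) :
    norm q s = norm q s' := by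
  unfold norm
  rcases eq_or_ne s 0 with rfl | hs
  · simp [h0.1 rfl]
  · have hs' : s' ≠ 0 := fun hh => hs (h0.2 hh)
    rw [if_neg hs, if_neg hs']
    have : (s - 1) % (q - 1) = (s' - 1) % (q - 1) := by
      have h1 : (s - 1 + 1) % (q - 1) = (s' - 1 + 1) % (q - 1) := by
        rw [Nat.sub_add_cancel (by omega), Nat.sub_add_cancel (by omega)]
        exact h
      have := Nat.ModEq.add_right_cancel' 1 h1
      exact this
    omega

lemma norm_absorb (q a s : ℕ) : norm q (a + norm q s) = norm q (a + s) := by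
  apply norm_congr
  · obtain ⟨t, ht⟩ := norm_spec q s
    conv_rhs => rw [ht]
    rw [← add_assoc, Nat.add_mul_mod_self_left]
  · rw [Nat.add_eq_zero, Nat.add_eq_zero, norm_eq_zero_iff]

lemma norm_absorb' (q a s : ℕ) : norm q (norm q s + a) = norm q (s + a) := by
  rw [add_comm, norm_absorb, add_comm]


/-- if digitwise sums (each ≤ 2p-2) represent p^n - 1 then each is p-1 -/
lemma all_digits_max (hp : 2 ≤ p) : ∀ (n : ℕ) (g : ℕ → ℕ), (∀ i < n, g i ≤ 2 * p - 2) →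
    (∑ i ∈ Finset.range n, g i * p ^ i = p ^ n - 1) → ∀ i < n, g i = p - 1 := by
  intro n
  induction n with
  | zero => intro g _ _ i hi; omega
  | succ n ih =>
    intro g hg hsum i hi
    have hsplit : ∑ i ∈ Finset.range (n+1), g i * p ^ i
        = g 0 + p * ∑ i ∈ Finset.range n, g (i+1) * p ^ i := by
      rw [Finset.sum_range_succ']
      simp only [pow_zero, mul_one]
      rw [add_comm]
      congr 1
      rw [Finset.mul_sum]
      apply Finset.sum_congr rfl
      intro j _
      rw [pow_succ]
      ring
    rw [hsplit] at hsum
    have hpn : 1 ≤ p ^ n := Nat.one_le_pow _ _ (by omega)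
    have hdecomp : p ^ (n+1) - 1 = p * (p ^ n - 1) + (p - 1) := by
      have h1 : 1 ≤ p ^ (n+1) := Nat.one_le_pow _ _ (by omega)
      zify [hpn, h1, (by omega : 1 ≤ p)]
      push_cast
      ring
    rw [hdecomp] at hsum
    -- g 0 ≡ p - 1 mod p
    have hg0 : g 0 = p - 1 := by
      have h1 : (g 0 + p * ∑ i ∈ Finset.range n, g (i+1) * p ^ i) % p
          = (p * (p ^ n - 1) + (p - 1)) % p := by rw [hsum]
      rw [Nat.add_mul_mod_self_left] at h1
      rw [add_comm (p * (p ^ n - 1)) (p - 1), Nat.add_mul_mod_self_left,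
        Nat.mod_eq_of_lt (show p - 1 < p by omega)] at h1
      have := hg 0 (by omega)
      have h3 : g 0 % p = g 0 ∨ g 0 % p = g 0 - p := by
        rcases Nat.lt_or_ge (g 0) p with h | h
        · left; exact Nat.mod_eq_of_lt h
        · right
          rw [Nat.mod_eq_sub_mod h, Nat.mod_eq_of_lt (by omega)]
      omega
    rcases Nat.eq_zero_or_pos i with rfl | hi0
    · exact hg0
    · have hsum2 : ∑ i ∈ Finset.range n, g (i+1) * p ^ i = p ^ n - 1 := by
        rw [hg0] at hsum
        have h4 : p * ∑ i ∈ Finset.range n, g (i+1) * p ^ i = p * (p ^ n - 1) := by omega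
        exact Nat.eq_of_mul_eq_mul_left (by omega) h4
      have := ih (fun j => g (j+1)) (fun j hj => hg (j+1) (by omega)) hsum2 (i-1) (by omega)
      simpa [Nat.sub_add_cancel hi0] using this

section DigitFormula

variable (hp : 2 ≤ p) {q a b : ℕ} (hq : q = p ^ f) (ha : a ≤ q - 1) (hb : b ≤ q - 1)

/-- carry indicator -/
noncomputable def cind (p f a b : ℕ) [NeZero f] (i : ZMod f) : ℕ :=
  if i ∈ Eset p f a b then 1 else 0

include hp hq ha hb in
/-- Main digit formula: digit of the cyclic sum. -/
lemma digit_nadd (i : ZMod f) :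
    digitZ p f (nadd q a b) i + p * cind p f a b i
      = digitZ p f a i + digitZ p f b i + cind p f a b (i - 1) := by
  have hf : 0 < f := Nat.pos_of_ne_zero (NeZero.ne f)
  have hq2 : 2 ≤ q := by
    have : p ^ 1 ≤ p ^ f := Nat.pow_le_pow_right (by omega) hf
    simp at this
    omega
  obtain ⟨hc1, hc2, hc3, hc4, hc5⟩ := Eset_spec (f := f) hp a b
  set e : ZMod f → ℕ := cind p f a b with he
  have he01 : ∀ j : ZMod f, e j = 0 ∨ e j = 1 := by
    intro j
    unfold e
    unfold cind
    split <;> simp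
  have hdig : ∀ (c : ℕ) (j : ZMod f), digitZ p f c j < p := by
    intro c j
    exact Nat.mod_lt _ (by omega)
  -- the putative digits
  set t : ZMod f → ℕ := fun j => digitZ p f a j + digitZ p f b j + e (j-1) - p * e j with ht
  have hmem : ∀ j : ZMod f, e j = 1 ↔ j ∈ Eset p f a b := by
    intro j
    unfold e
    unfold cind
    split <;> simp_all
  have hmem0 : ∀ j : ZMod f, e j = 0 ↔ j ∉ Eset p f a b := by
    intro j
    unfold e
    unfold cind
    split <;> simp_all
  have key : ∀ j : ZMod f, t j + p * e j = digitZ p f a j + digitZ p f b j + e (j-1) ∧ t j ≤ p - 1 := by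
    intro j
    have hda := hdig a j
    have hdb := hdig b j
    rcases he01 j with h0 | h1
    · rcases he01 (j-1) with h0' | h1'
      · have := hc1 j (by rw [← hmem0, h0']) (by rw [← hmem0, h0])
        constructor <;> (simp only [ht, h0, h0']; omega)
      · have := hc2 j (by rw [← hmem, h1']) (by rw [← hmem0, h0])
        constructor <;> (simp only [ht, h0, h1']; omega)
    · rcases he01 (j-1) with h0' | h1'
      · have := hc3 j (by rw [← hmem0, h0']) (by rw [← hmem, h1])
        constructor <;> (simp only [ht, h1, h0']; omega)
      · have := hc4 j (by rw [← hmem, h1']) (by rw [← hmem, h1])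
        constructor <;> (simp only [ht, h1, h1']; omega)
  -- the candidate value
  set N : ℕ := ∑ k ∈ Finset.range f, t (k : ZMod f) * p ^ k with hN
  have hNlt : N < q := by
    rw [hq]
    exact sum_lt_pow (by omega) (fun k hk => (key _).2)
  have hdigN : ∀ i : ZMod f, digitZ p f N i = t i := by
    intro i
    rw [digitZ_eq, hN]
    rw [dig_sum (by omega) (fun k hk => by have := (key (k : ZMod f)).2; omega) (ZMod.val_lt i)]
    rw [zcast]
  -- main counting identity
  have hsum_digits : ∀ c : ℕ, c ≤ q - 1 → ∑ k ∈ Finset.range f, digitZ p f c (k : ZMod f) * p ^ k = c := by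
    intro c hc
    have : ∀ k ∈ Finset.range f, digitZ p f c (k : ZMod f) * p ^ k = dig p c k * p ^ k := by
      intro k hk
      rw [digitZ_eq, ZMod.val_cast_of_lt (Finset.mem_range.1 hk)]
    rw [Finset.sum_congr rfl this, sum_digits (by omega)]
  have hNsum : N + e (-1) * q = a + b + e (-1) := by
    have h1 : ∑ k ∈ Finset.range f, (t (k : ZMod f) + p * e (k : ZMod f)) * p ^ k
        = ∑ k ∈ Finset.range f, (digitZ p f a (k : ZMod f) + digitZ p f b (k : ZMod f) + e ((k : ZMod f) - 1)) * p ^ k := by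
      apply Finset.sum_congr rfl
      intro k _
      rw [(key _).1]
    -- expand
    have h2 : N + p * ∑ k ∈ Finset.range f, e (k : ZMod f) * p ^ k
        = a + b + ∑ k ∈ Finset.range f, e ((k : ZMod f) - 1) * p ^ k := by
      have e1 : ∑ k ∈ Finset.range f, (t (k : ZMod f) + p * e (k : ZMod f)) * p ^ k
          = N + p * ∑ k ∈ Finset.range f, e (k : ZMod f) * p ^ k := by
        rw [hN, Finset.mul_sum, ← Finset.sum_add_distrib]
        apply Finset.sum_congr rfl
        intro k _
        ring
      have e2 : ∑ k ∈ Finset.range f, (digitZ p f a (k : ZMod f) + digitZ p f b (k : ZMod f) + e ((k : ZMod f) - 1)) * p ^ k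
          = a + b + ∑ k ∈ Finset.range f, e ((k : ZMod f) - 1) * p ^ k := by
        conv_rhs => rw [← hsum_digits a ha, ← hsum_digits b hb]
        rw [← Finset.sum_add_distrib, ← Finset.sum_add_distrib]
        apply Finset.sum_congr rfl
        intro k _
        ring
      rw [← e1, ← e2, h1]
    -- reindexing identity
    obtain ⟨F, hF⟩ : ∃ F, f = F + 1 := ⟨f - 1, by omega⟩
    have hFm : ((F : ℕ) : ZMod f) = -1 := by
      have h5 : ((F : ℕ) : ZMod f) + 1 = ((F + 1 : ℕ) : ZMod f) := by push_cast; ring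
      rw [← hF] at h5
      exact eq_neg_of_add_eq_zero_left (by rw [h5, ZMod.natCast_self])
    have h3 : ∑ k ∈ Finset.range f, e ((k : ZMod f) - 1) * p ^ k + e (-1) * q
        = e (-1) + p * ∑ k ∈ Finset.range f, e (k : ZMod f) * p ^ k := by
      rw [show Finset.range f = Finset.range (F + 1) from by rw [hF]]
      rw [Finset.sum_range_succ', Finset.sum_range_succ]
      have c0 : (((0 : ℕ) : ZMod f) - 1) = (-1 : ZMod f) := by push_cast; ring
      rw [c0]
      simp only [pow_zero, mul_one]
      have hsc : ∀ k ∈ Finset.range F, e (((k + 1 : ℕ) : ZMod f) - 1) * p ^ (k + 1)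
          = p * (e ((k : ℕ) : ZMod f) * p ^ k) := by
        intro k _
        have c1 : (((k + 1 : ℕ) : ZMod f) - 1) = ((k : ℕ) : ZMod f) := by push_cast; ring
        rw [c1, pow_succ]
        ring
      rw [Finset.sum_congr rfl hsc, hFm]
      rw [mul_add, Finset.mul_sum]
      have hqe : p * (e (-1) * p ^ F) = e (-1) * q := by
        rw [hq, show p ^ f = p ^ (F + 1) from by rw [hF], pow_succ]
        ring
      omega
    omega
  -- identify N with nadd q a b
  have hfinal : N = nadd q a b := by
    rcases he01 (-1) with hem | hem
    · rw [hem] at hNsum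
      simp only [zero_mul, add_zero] at hNsum
      rcases Nat.eq_zero_or_pos (a + b) with h0 | hpos
      · rw [nadd, if_pos h0]
        omega
      · rw [nadd, if_neg (by omega), ← hNsum, Nat.mod_eq_of_lt (show N - 1 < q - 1 by omega)]
        omega
    · rw [hem] at hNsum
      simp only [one_mul, mul_one] at hNsum
      have hpos : 0 < a + b := by omega
      have hN0 : N ≠ 0 := by
        intro hN0
        have hab : a + b = q - 1 := by omega
        have hallS : ∀ j : ZMod f, digitZ p f a j + digitZ p f b j = p - 1 := by
          have hsumeq : (∑ k ∈ Finset.range f,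
              (digitZ p f a ((k : ℕ) : ZMod f) + digitZ p f b ((k : ℕ) : ZMod f)) * p ^ k) = p ^ f - 1 := by
            have hrw : ∑ k ∈ Finset.range f,
                (digitZ p f a ((k : ℕ) : ZMod f) + digitZ p f b ((k : ℕ) : ZMod f)) * p ^ k
                = (∑ k ∈ Finset.range f, digitZ p f a ((k : ℕ) : ZMod f) * p ^ k)
                  + ∑ k ∈ Finset.range f, digitZ p f b ((k : ℕ) : ZMod f) * p ^ k := by
              rw [← Finset.sum_add_distrib]
              exact Finset.sum_congr rfl (fun k _ => by ring)
            rw [hrw, hsum_digits a ha, hsum_digits b hb, ← hq, hab]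
          have hbig := all_digits_max hp f
            (fun k => digitZ p f a ((k : ℕ) : ZMod f) + digitZ p f b ((k : ℕ) : ZMod f))
            (fun k hk => by
              have h6 := hdig a ((k : ℕ) : ZMod f)
              have h7 := hdig b ((k : ℕ) : ZMod f)
              show digitZ p f a ((k : ℕ) : ZMod f) + digitZ p f b ((k : ℕ) : ZMod f) ≤ 2 * p - 2
              omega)
            hsumeq
          intro j
          have hjv : digitZ p f a ((j.val : ℕ) : ZMod f) + digitZ p f b ((j.val : ℕ) : ZMod f) = p - 1 :=
            hbig j.val (ZMod.val_lt j)
          rwa [zcast] at hjv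
        have hE := hc5 hallS
        have hno : (-1 : ZMod f) ∉ Eset p f a b := by
          rw [hE]
          exact Finset.notMem_empty _
        rw [← hmem0] at hno
        omega
      rw [nadd, if_neg (by omega)]
      have h1 : a + b - 1 = (N - 1) + (q - 1) * 1 := by omega
      rw [h1, Nat.add_mul_mod_self_left, Nat.mod_eq_of_lt (show N - 1 < q - 1 by omega)]
      omega
  rw [← hfinal, hdigN]
  exact (key i).1

end DigitFormula

lemma norm_modeq (q s : ℕ) : Nat.ModEq (q - 1) (norm q s) s := by
  obtain ⟨t, ht⟩ := norm_spec q s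
  show norm q s % (q - 1) = s % (q - 1)
  conv_rhs => rw [ht]
  rw [Nat.add_mul_mod_self_left]

lemma nadd_modeq (q a b : ℕ) : Nat.ModEq (q - 1) (nadd q a b) (a + b) := by
  rw [nadd_eq_norm]
  exact norm_modeq q _

lemma nadd_congr' {q : ℕ} {x y x' y' : ℕ} (hm : Nat.ModEq (q - 1) (x + y) (x' + y'))
    (hz : x + y = 0 ↔ x' + y' = 0) : nadd q x y = nadd q x' y' := by
  rw [nadd_eq_norm, nadd_eq_norm]
  exact norm_congr q _ _ hm hz

lemma nadd_le {q : ℕ} (hq2 : 2 ≤ q) (a b : ℕ) : nadd q a b ≤ q - 1 := by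
  rw [nadd_eq_norm]
  exact norm_le q _ hq2

lemma nadd_eq_zero_iff {q a b : ℕ} : nadd q a b = 0 ↔ a + b = 0 := by
  rw [nadd_eq_norm, norm_eq_zero_iff]

/-- cyclic balance: if p * x i = x (i-1) for all i, then x = 0 -/
lemma carry_balance (hp : 2 ≤ p) (x : ZMod f → ℤ)
    (hx : ∀ i : ZMod f, (p : ℤ) * x i = x (i - 1)) : ∀ i, x i = 0 := by
  have hf : 0 < f := Nat.pos_of_ne_zero (NeZero.ne f)
  have key : ∀ (k : ℕ) (i : ZMod f), x (i - (k : ℕ)) = (p : ℤ) ^ k * x i := by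
    intro k
    induction k with
    | zero => intro i; simp
    | succ k ih =>
      intro i
      have h1 : i - ((k + 1 : ℕ) : ZMod f) = (i - (k : ℕ)) - 1 := by push_cast; ring
      rw [h1, ← hx (i - (k : ℕ)), ih i, pow_succ]
      ring
  intro i
  have h1 := key f i
  rw [ZMod.natCast_self, sub_zero] at h1
  have h2 : ((p : ℤ) ^ f - 1) * x i = 0 := by linarith
  have h3 : (p : ℤ) ^ f - 1 ≠ 0 := by
    have : (2 : ℤ) ^ f ≤ (p : ℤ) ^ f := pow_le_pow_left₀ (by norm_num) (by exact_mod_cast hp) f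
    have : (2 : ℤ) ^ 1 ≤ (2 : ℤ) ^ f := pow_le_pow_right₀ (by norm_num) hf
    omega
  rcases mul_eq_zero.1 h2 with h | h
  · exact absurd h h3
  · exact h

lemma count_val (s : Finset (ZMod f)) (i : ZMod f) :
    Multiset.count i s.val = if i ∈ s then 1 else 0 := by
  split
  · exact Multiset.count_eq_one_of_mem s.nodup (by assumption)
  · exact Multiset.count_eq_zero_of_notMem (by rwa [← Finset.mem_def] at *)

section Master

variable (hp : 2 ≤ p) {q : ℕ} (hq : q = p ^ f)

include hp hq in
lemma master {e₁ e₂ e₃ e₄ e₅ : ℕ} (h1 : e₁ ≤ q - 1) (h2 : e₂ ≤ q - 1) (h3 : e₃ ≤ q - 1)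
    (h4 : e₄ ≤ q - 1) (h5 : e₅ ≤ q - 1)
    (h24 : Eset p f e₂ e₄ = ∅) (h35 : Eset p f e₃ e₅ = ∅) :
    (Eset p f e₂ e₃).val + (Eset p f e₄ e₅).val
        + (Eset p f e₁ (nadd q e₂ e₃)).val
        + (Eset p f (nadd q e₁ (nadd q e₂ e₃)) (nadd q e₄ e₅)).val
      = (Eset p f (nadd q e₂ e₄) (nadd q e₃ e₅)).val
        + (Eset p f e₁ (nadd q e₂ (nadd q e₃ (nadd q e₄ e₅)))).val := by
  have hf : 0 < f := Nat.pos_of_ne_zero (NeZero.ne f)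
  have hq2 : 2 ≤ q := by
    have : p ^ 1 ≤ p ^ f := Nat.pow_le_pow_right (by omega) hf
    simp at this
    omega
  set s23 := nadd q e₂ e₃ with hs23
  set s45 := nadd q e₄ e₅ with hs45
  set s123 := nadd q e₁ s23 with hs123
  set sT := nadd q s123 s45 with hsT
  set s24 := nadd q e₂ e₄ with hs24
  set s35 := nadd q e₃ e₅ with hs35
  set u := nadd q e₂ (nadd q e₃ s45) with hu
  -- value identities
  have vu : nadd q s24 s35 = u := by
    simp only [hs24, hs35, hu, hs45]
    have hA : Nat.ModEq (q-1) (nadd q e₂ e₄ + nadd q e₃ e₅) (e₂ + e₄ + (e₃ + e₅)) :=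
      Nat.ModEq.add (nadd_modeq _ _ _) (nadd_modeq _ _ _)
    have hB : Nat.ModEq (q-1) (e₂ + nadd q e₃ (nadd q e₄ e₅)) (e₂ + (e₃ + (e₄ + e₅))) :=
      Nat.ModEq.add_left _ ((nadd_modeq _ _ _).trans (Nat.ModEq.add_left _ (nadd_modeq _ _ _)))
    have hre : e₂ + e₄ + (e₃ + e₅) = e₂ + (e₃ + (e₄ + e₅)) := by ring
    rw [hre] at hA
    exact nadd_congr' (hA.trans hB.symm)
      (by simp only [Nat.add_eq_zero, nadd_eq_zero_iff]; omega)
  have vT : nadd q e₁ u = sT := by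
    simp only [hsT, hs123, hs23, hs45, hu]
    have hA : Nat.ModEq (q-1) (e₁ + nadd q e₂ (nadd q e₃ (nadd q e₄ e₅)))
        (e₁ + (e₂ + (e₃ + (e₄ + e₅)))) :=
      Nat.ModEq.add_left _ ((nadd_modeq _ _ _).trans (Nat.ModEq.add_left _
        ((nadd_modeq _ _ _).trans (Nat.ModEq.add_left _ (nadd_modeq _ _ _)))))
    have hB : Nat.ModEq (q-1) (nadd q e₁ (nadd q e₂ e₃) + nadd q e₄ e₅)
        (e₁ + (e₂ + e₃) + (e₄ + e₅)) :=
      Nat.ModEq.add ((nadd_modeq _ _ _).trans (Nat.ModEq.add_left _ (nadd_modeq _ _ _)))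
        (nadd_modeq _ _ _)
    have hre : e₁ + (e₂ + (e₃ + (e₄ + e₅))) = e₁ + (e₂ + e₃) + (e₄ + e₅) := by ring
    rw [hre] at hA
    exact nadd_congr' (hA.trans hB.symm)
      (by simp only [Nat.add_eq_zero, nadd_eq_zero_iff]; omega)
  -- bounds
  have hb23 : s23 ≤ q - 1 := nadd_le hq2 _ _
  have hb45 : s45 ≤ q - 1 := nadd_le hq2 _ _
  have hb123 : s123 ≤ q - 1 := nadd_le hq2 _ _
  have hb24 : s24 ≤ q - 1 := nadd_le hq2 _ _
  have hb35 : s35 ≤ q - 1 := nadd_le hq2 _ _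
  have hbu : u ≤ q - 1 := nadd_le hq2 _ _
  -- the eight digit identities
  have E1 := fun i => digit_nadd hp hq h2 h3 i
  have E2 := fun i => digit_nadd hp hq h4 h5 i
  have E3 := fun i => digit_nadd hp hq h1 hb23 i
  have E4 := fun i => digit_nadd hp hq hb123 hb45 i
  have E5 := fun i => digit_nadd hp hq h2 h4 i
  have E6 := fun i => digit_nadd hp hq h3 h5 i
  have E7 := fun i => digit_nadd hp hq hb24 hb35 i
  have E8 := fun i => digit_nadd hp hq h1 hbu i
  -- carry indicators vanish for (2,4) and (3,5)
  have c24 : ∀ i : ZMod f, cind p f e₂ e₄ i = 0 := by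
    intro i
    unfold cind
    rw [h24]
    simp
  have c35 : ∀ i : ZMod f, cind p f e₃ e₅ i = 0 := by
    intro i
    unfold cind
    rw [h35]
    simp
  -- counting equality
  have hcount : ∀ i : ZMod f,
      cind p f e₂ e₃ i + cind p f e₄ e₅ i + cind p f e₁ s23 i + cind p f s123 s45 i
        = cind p f s24 s35 i + cind p f e₁ u i := by
    have hbal := carry_balance (f := f) hp
      (fun i => ((cind p f e₂ e₃ i + cind p f e₄ e₅ i + cind p f e₁ s23 i + cind p f s123 s45 i : ℕ) : ℤ)
        - ((cind p f s24 s35 i + cind p f e₁ u i : ℕ) : ℤ))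
      ?_
    · intro i
      have := hbal i
      push_cast at this
      omega
    · intro i
      have e1 := E1 i
      have e2 := E2 i
      have e3 := E3 i
      have e4 := E4 i
      have e5 := E5 i
      have e6 := E6 i
      have e7 := E7 i
      have e8 := E8 i
      have e1' := E1 (i - 1)
      rw [c24 i, c24 (i - 1)] at e5
      rw [c35 i, c35 (i - 1)] at e6
      rw [vu] at e7
      rw [vT] at e8
      push_cast
      have z1 : ((digitZ p f s23 i : ℕ) : ℤ) + p * cind p f e₂ e₃ i
          = digitZ p f e₂ i + digitZ p f e₃ i + cind p f e₂ e₃ (i - 1) := by exact_mod_cast e1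
      have z2 : ((digitZ p f s45 i : ℕ) : ℤ) + p * cind p f e₄ e₅ i
          = digitZ p f e₄ i + digitZ p f e₅ i + cind p f e₄ e₅ (i - 1) := by exact_mod_cast e2
      have z3 : ((digitZ p f s123 i : ℕ) : ℤ) + p * cind p f e₁ s23 i
          = digitZ p f e₁ i + digitZ p f s23 i + cind p f e₁ s23 (i - 1) := by exact_mod_cast e3
      have z4 : ((digitZ p f sT i : ℕ) : ℤ) + p * cind p f s123 s45 i
          = digitZ p f s123 i + digitZ p f s45 i + cind p f s123 s45 (i - 1) := by exact_mod_cast e4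
      have z5 : ((digitZ p f s24 i : ℕ) : ℤ) = digitZ p f e₂ i + digitZ p f e₄ i := by
        exact_mod_cast by simpa using e5
      have z6 : ((digitZ p f s35 i : ℕ) : ℤ) = digitZ p f e₃ i + digitZ p f e₅ i := by
        exact_mod_cast by simpa using e6
      have z7 : ((digitZ p f u i : ℕ) : ℤ) + p * cind p f s24 s35 i
          = digitZ p f s24 i + digitZ p f s35 i + cind p f s24 s35 (i - 1) := by exact_mod_cast e7
      have z8 : ((digitZ p f sT i : ℕ) : ℤ) + p * cind p f e₁ u i
          = digitZ p f e₁ i + digitZ p f u i + cind p f e₁ u (i - 1) := by exact_mod_cast e8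
      linarith [z1, z2, z3, z4, z5, z6, z7, z8]
  -- convert to multisets
  have hvu' : Eset p f s24 s35 = Eset p f s24 s35 := rfl
  apply Multiset.ext.2
  intro i
  simp only [Multiset.count_add, count_val]
  have hc := hcount i
  unfold cind at hc
  split_ifs at hc ⊢ <;> omega

end Master

lemma carrySet_eq (hp : 2 ≤ p) (a b : ℕ) : carrySet p f a b = Eset p f a b := by
  have hex : ∃ I : Finset (ZMod f), CarrySetSpec p f a b I := ⟨Eset p f a b, Eset_spec hp a b⟩
  rw [carrySet, dif_pos hex]
  exact spec_unique hp hex.choose_spec (Eset_spec hp a b)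

lemma carrySet_spec (hp : 2 ≤ p) (a b : ℕ) : CarrySetSpec p f a b (carrySet p f a b) := by
  rw [carrySet_eq hp]
  exact Eset_spec hp a b

lemma digitZ_lt (hp : 2 ≤ p) (c : ℕ) (j : ZMod f) : digitZ p f c j < p :=
  Nat.mod_lt _ (by omega)

lemma sum_digitZ (hp : 2 ≤ p) {q c : ℕ} (hq : q = p ^ f) (hc : c ≤ q - 1) :
    ∑ k ∈ Finset.range f, digitZ p f c ((k : ℕ) : ZMod f) * p ^ k = c := by
  have h1 : 1 ≤ p ^ f := Nat.one_le_pow _ _ (by omega)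
  have h2 : ∀ k ∈ Finset.range f, digitZ p f c ((k : ℕ) : ZMod f) * p ^ k = dig p c k * p ^ k := by
    intro k hk
    rw [digitZ_eq, ZMod.val_cast_of_lt (Finset.mem_range.1 hk)]
  rw [Finset.sum_congr rfl h2, sum_digits (show c < p ^ f by omega)]

lemma dle_le (hp : 2 ≤ p) {q a b : ℕ} (hq : q = p ^ f) (ha : a ≤ q - 1) (hb : b ≤ q - 1)
    (h : dle p f a b) : a ≤ b := by
  rw [← sum_digitZ hp hq ha, ← sum_digitZ hp hq hb]
  exact Finset.sum_le_sum (fun k _ => Nat.mul_le_mul_right _ (h _))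

lemma digit_sub (hp : 2 ≤ p) {q a b : ℕ} (hq : q = p ^ f) (ha : a ≤ q - 1) (hb : b ≤ q - 1)
    (h : dle p f a b) (i : ZMod f) :
    digitZ p f (b - a) i = digitZ p f b i - digitZ p f a i := by
  set g : ℕ → ℕ := fun k => digitZ p f b ((k : ℕ) : ZMod f) - digitZ p f a ((k : ℕ) : ZMod f)
    with hgdef
  have hadd : (∑ k ∈ Finset.range f, g k * p ^ k)
      + ∑ k ∈ Finset.range f, digitZ p f a ((k : ℕ) : ZMod f) * p ^ k
      = ∑ k ∈ Finset.range f, digitZ p f b ((k : ℕ) : ZMod f) * p ^ k := by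
    rw [← Finset.sum_add_distrib]
    apply Finset.sum_congr rfl
    intro k _
    rw [← add_mul]
    congr 1
    simp only [hgdef]
    exact Nat.sub_add_cancel (h _)
  rw [sum_digitZ hp hq ha, sum_digitZ hp hq hb] at hadd
  have hba : ∑ k ∈ Finset.range f, g k * p ^ k = b - a := by omega
  rw [digitZ_eq, ← hba,
    dig_sum (by omega) (fun k hk => lt_of_le_of_lt (Nat.sub_le _ _) (digitZ_lt hp b _)) (ZMod.val_lt i)]
  show digitZ p f b ((i.val : ℕ) : ZMod f) - digitZ p f a ((i.val : ℕ) : ZMod f)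
      = digitZ p f b i - digitZ p f a i
  rw [zcast]

lemma digitZ_zero (i : ZMod f) : digitZ p f 0 i = 0 := by
  show 0 / p ^ i.val % p = 0
  simp

lemma Eset_zero_right (hp : 2 ≤ p) (a : ℕ) : Eset p f a 0 = ∅ := by
  ext i
  simp only [Finset.notMem_empty, iff_false]
  intro hi
  obtain ⟨k, _, hS, _⟩ := mem_Eset.1 hi
  unfold dS at hS
  rw [digitZ_zero] at hS
  have := digitZ_lt hp a (i - ((k : ℕ) : ZMod f))
  omega

lemma nadd_zero (q : ℕ) : nadd q 0 0 = 0 := by simp [nadd]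

lemma grpRep_pos (q : ℕ) (X : ℤ) : 1 ≤ grpRep q X := by
  unfold grpRep
  omega

lemma grpRep_le {q : ℕ} (hq2 : 2 ≤ q) (X : ℤ) : grpRep q X ≤ q - 1 := by
  unfold grpRep
  have h1 : (X - 1) % ((q : ℤ) - 1) < (q : ℤ) - 1 := Int.emod_lt_of_pos _ (by omega)
  have h2 : 0 ≤ (X - 1) % ((q : ℤ) - 1) := Int.emod_nonneg _ (by omega)
  omega

lemma grpRep_cast {q : ℕ} (hq2 : 2 ≤ q) (X : ℤ) :
    (grpRep q X : ℤ) = (X - 1) % ((q : ℤ) - 1) + 1 := by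
  have h2 : 0 ≤ (X - 1) % ((q : ℤ) - 1) := Int.emod_nonneg _ (by omega)
  unfold grpRep
  push_cast [Int.toNat_of_nonneg h2]
  ring

lemma grpRep_dvd {q : ℕ} (hq2 : 2 ≤ q) (X : ℤ) : ((q : ℤ) - 1) ∣ (X - grpRep q X) := by
  refine ⟨(X - 1) / ((q : ℤ) - 1), ?_⟩
  rw [grpRep_cast hq2, Int.emod_def]
  ring

lemma grpRep_unique {q : ℕ} (hq2 : 2 ≤ q) (X : ℤ) (u : ℕ) (h1 : 1 ≤ u) (h2 : u ≤ q - 1)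
    (hd : ((q : ℤ) - 1) ∣ (X - u)) : grpRep q X = u := by
  have hmod : (X - 1) % ((q : ℤ) - 1) = ((u : ℤ) - 1) % ((q : ℤ) - 1) := by
    have hme : Int.ModEq ((q : ℤ) - 1) X (u : ℤ) := by
      apply Int.ModEq.symm
      apply Int.modEq_iff_dvd.2
      exact hd
    exact hme.sub_right 1
  have hu : ((u : ℤ) - 1) % ((q : ℤ) - 1) = (u : ℤ) - 1 :=
    Int.emod_eq_of_lt (by omega) (by omega)
  unfold grpRep
  rw [hmod, hu]
  omega

lemma grpRep_congr {q : ℕ} (hq2 : 2 ≤ q) {X Y : ℤ} (h : ((q : ℤ) - 1) ∣ (X - Y)) :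
    grpRep q X = grpRep q Y := by
  apply grpRep_unique hq2 X _ (grpRep_pos q Y) (grpRep_le hq2 Y)
  have h2 := grpRep_dvd hq2 Y
  have : X - (grpRep q Y : ℤ) = (X - Y) + (Y - grpRep q Y) := by ring
  rw [this]
  exact dvd_add h h2

lemma nadd_dvd_int {q : ℕ} (hq2 : 2 ≤ q) (a b : ℕ) :
    ((q : ℤ) - 1) ∣ ((a : ℤ) + b - nadd q a b) := by
  have h := (nadd_modeq q a b).dvd
  have hc : ((q - 1 : ℕ) : ℤ) = (q : ℤ) - 1 := by push_cast [Nat.cast_sub (by omega : 1 ≤ q)]; ring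
  rw [hc] at h
  have h2 : ((a : ℤ) + b - nadd q a b) = ((a + b : ℕ) : ℤ) - ((nadd q a b : ℕ) : ℤ) := by push_cast; ring
  rw [h2]
  exact h

lemma nadd_grpRep {q : ℕ} (hq2 : 2 ≤ q) (X : ℤ) (m : ℕ) :
    nadd q (grpRep q X) m = grpRep q (X + m) := by
  symm
  apply grpRep_unique hq2 _ _ ?_ (nadd_le hq2 _ _) ?_
  · have h0 : nadd q (grpRep q X) m ≠ 0 := by
      intro h
      have := nadd_eq_zero_iff.1 h
      have := grpRep_pos q X
      omega
    omega
  · have h1 := nadd_dvd_int hq2 (grpRep q X) m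
    have h2 := grpRep_dvd hq2 X
    have : X + (m : ℤ) - (nadd q (grpRep q X) m : ℤ)
        = (X - grpRep q X) + ((grpRep q X : ℤ) + m - nadd q (grpRep q X) m) := by ring
    rw [this]
    exact dvd_add h2 h1

lemma mem_of_val_eq {A B C D G H : Finset (ZMod f)}
    (h : A.val + B.val + C.val + D.val = G.val + H.val) {i : ZMod f}
    (hm : i ∈ A ∨ i ∈ B ∨ i ∈ C ∨ i ∈ D) : i ∈ G ∨ i ∈ H := by
  have h1 : i ∈ A.val + B.val + C.val + D.val := by
    simp only [Multiset.mem_add, ← Finset.mem_def]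
    tauto
  rw [h] at h1
  simpa only [Multiset.mem_add, ← Finset.mem_def] using h1

end Aux



open Aux in
/-- `⪯_r` is a partial order on the set of types (reflexive, transitive and
antisymmetric on pairs with second component a canonical representative `≤ q−1`);
transitivity rests on the multiset identity of carry sets
`I(ε₂,ε₃) ∪ I(ε₄,ε₅) ∪ I(ε₁,ε₂+ε₃) ∪ I(ε₁+ε₂+ε₃, ε₄+ε₅)
  = I(ε₂+ε₄, ε₃+ε₅) ∪ I(ε₁, ε₂+ε₃+ε₄+ε₅)`
whenever `I(ε₂,ε₄) = I(ε₃,ε₅) = ∅`, which is also asserted. -/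
theorem stmt_13 (p f q r : ℕ) (hp : p.Prime) (hodd : Odd p) [NeZero f] (hq : q = p ^ f) :
    (∀ x : Finset (ZMod f) × ℕ, x.2 ≤ q - 1 → typeLe p f q r x x) ∧
    (∀ x y z : Finset (ZMod f) × ℕ, x.2 ≤ q - 1 → y.2 ≤ q - 1 → z.2 ≤ q - 1 →
      typeLe p f q r x y → typeLe p f q r y z → typeLe p f q r x z) ∧
    (∀ x y : Finset (ZMod f) × ℕ, x.2 ≤ q - 1 → y.2 ≤ q - 1 →
      typeLe p f q r x y → typeLe p f q r y x → x = y) ∧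
    (∀ e₁ e₂ e₃ e₄ e₅ : ℕ, e₁ ≤ q - 1 → e₂ ≤ q - 1 → e₃ ≤ q - 1 → e₄ ≤ q - 1 → e₅ ≤ q - 1 →
      carrySet p f e₂ e₄ = ∅ → carrySet p f e₃ e₅ = ∅ →
      (carrySet p f e₂ e₃).val + (carrySet p f e₄ e₅).val
          + (carrySet p f e₁ (nadd q e₂ e₃)).val
          + (carrySet p f (nadd q e₁ (nadd q e₂ e₃)) (nadd q e₄ e₅)).val
        = (carrySet p f (nadd q e₂ e₄) (nadd q e₃ e₅)).val
          + (carrySet p f e₁ (nadd q e₂ (nadd q e₃ (nadd q e₄ e₅)))).val) := by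
  have hp2 : 2 ≤ p := hp.two_le
  have hf : 0 < f := Nat.pos_of_ne_zero (NeZero.ne f)
  have hq2 : 2 ≤ q := by
    have h1 : p ^ 1 ≤ p ^ f := Nat.pow_le_pow_right (by omega) hf
    simp at h1
    omega
  refine ⟨?_, ?_, ?_, ?_⟩
  · -- reflexivity
    intro x _
    exact ⟨fun i => le_rfl, Finset.subset_union_left.trans Finset.subset_union_left⟩
  · -- transitivity
    intro x y z hx hy hz hxy hyz
    obtain ⟨hd1, hs1⟩ := hxy
    obtain ⟨hd2, hs2⟩ := hyz
    refine ⟨fun i => (hd1 i).trans (hd2 i), ?_⟩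
    have hxy2 : x.2 ≤ y.2 := dle_le hp2 hq hx hy hd1
    have hyz2 : y.2 ≤ z.2 := dle_le hp2 hq hy hz hd2
    have hba : y.2 - x.2 ≤ q - 1 := by omega
    have hbb : z.2 - y.2 ≤ q - 1 := by omega
    have hbc : z.2 - x.2 ≤ q - 1 := by omega
    have hdA := digit_sub hp2 hq hx hy hd1
    have hdB := digit_sub hp2 hq hy hz hd2
    have hdC := digit_sub hp2 hq hx hz (fun i => (hd1 i).trans (hd2 i))
    -- no carries between the increments
    have hE24 : Eset p f (z.2 - y.2) (y.2 - x.2) = ∅ := by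
      ext i
      simp only [Finset.notMem_empty, iff_false]
      intro hi
      obtain ⟨k, _, hS, _⟩ := mem_Eset.1 hi
      unfold dS at hS
      rw [hdB, hdA] at hS
      have hb1 := digitZ_lt hp2 z.2 (i - ((k : ℕ) : ZMod f))
      have hb2 := hd1 (i - ((k : ℕ) : ZMod f))
      have hb3 := hd2 (i - ((k : ℕ) : ZMod f))
      omega
    have hM := master hp2 hq (grpRep_le hq2 ((r : ℤ) - 2 * z.2)) hbb hbb hba hba hE24 hE24
    -- rewrite the six nadd expressions
    have hnba : nadd q (z.2 - y.2) (y.2 - x.2) = z.2 - x.2 := by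
      rw [nadd_eq_norm, show (z.2 - y.2) + (y.2 - x.2) = z.2 - x.2 from by omega]
      exact norm_eq_self q _ hq2 hbc
    have hnR : nadd q (grpRep q ((r : ℤ) - 2 * z.2)) (nadd q (z.2 - y.2) (z.2 - y.2))
        = grpRep q ((r : ℤ) - 2 * y.2) := by
      rw [nadd_grpRep hq2]
      apply grpRep_congr hq2
      have hdvd := nadd_dvd_int hq2 (z.2 - y.2) (z.2 - y.2)
      have hcast : ((z.2 - y.2 : ℕ) : ℤ) = (z.2 : ℤ) - y.2 := by
        push_cast [Nat.cast_sub hyz2]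
        ring
      have heq : (r : ℤ) - 2 * z.2 + (nadd q (z.2 - y.2) (z.2 - y.2) : ℕ) - ((r : ℤ) - 2 * y.2)
          = -(((z.2 - y.2 : ℕ) : ℤ) + ((z.2 - y.2 : ℕ) : ℤ)
              - (nadd q (z.2 - y.2) (z.2 - y.2) : ℕ)) := by
        rw [hcast]
        ring
      rw [heq]
      exact dvd_neg.2 hdvd
    have hn2c : nadd q (z.2 - y.2) (nadd q (z.2 - y.2) (nadd q (y.2 - x.2) (y.2 - x.2)))
        = nadd q (z.2 - x.2) (z.2 - x.2) := by
      apply nadd_congr'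
      · have hA : Nat.ModEq (q - 1)
            ((z.2 - y.2) + nadd q (z.2 - y.2) (nadd q (y.2 - x.2) (y.2 - x.2)))
            ((z.2 - y.2) + ((z.2 - y.2) + ((y.2 - x.2) + (y.2 - x.2)))) :=
          Nat.ModEq.add_left _ ((nadd_modeq _ _ _).trans
            (Nat.ModEq.add_left _ (nadd_modeq _ _ _)))
        have hre : (z.2 - y.2) + ((z.2 - y.2) + ((y.2 - x.2) + (y.2 - x.2)))
            = (z.2 - x.2) + (z.2 - x.2) := by omega
        rw [hre] at hA
        exact hA
      · simp only [Nat.add_eq_zero, nadd_eq_zero_iff]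
        omega
    rw [hnba, hnR, hn2c] at hM
    -- the subset chase
    simp only [typeLe, carrySet_eq hp2] at hs1 hs2 ⊢
    intro i hi
    have step : (i ∈ Eset p f (z.2 - y.2) (z.2 - y.2) ∨ i ∈ Eset p f (y.2 - x.2) (y.2 - x.2)
        ∨ i ∈ Eset p f (grpRep q ((r : ℤ) - 2 * z.2)) (nadd q (z.2 - y.2) (z.2 - y.2))
        ∨ i ∈ Eset p f (grpRep q ((r : ℤ) - 2 * y.2)) (nadd q (y.2 - x.2) (y.2 - x.2)))
        → i ∈ z.1 ∪ Eset p f (grpRep q ((r : ℤ) - 2 * z.2)) (nadd q (z.2 - x.2) (z.2 - x.2))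
            ∪ Eset p f (z.2 - x.2) (z.2 - x.2) := by
      intro hm
      have := mem_of_val_eq hM (by tauto)
      rcases this with h | h
      · exact Finset.mem_union_right _ h
      · exact Finset.mem_union_left _ (Finset.mem_union_right _ h)
    have h1 := hs1 hi
    rcases Finset.mem_union.1 h1 with h1' | hA
    · rcases Finset.mem_union.1 h1' with hy1 | hRy
      · have h2 := hs2 hy1
        rcases Finset.mem_union.1 h2 with h2' | hB
        · rcases Finset.mem_union.1 h2' with hz1 | hRz
          · exact Finset.mem_union_left _ (Finset.mem_union_left _ hz1)
          · exact step (Or.inr (Or.inr (Or.inl hRz)))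
        · exact step (Or.inl hB)
      · exact step (Or.inr (Or.inr (Or.inr hRy)))
    · exact step (Or.inr (Or.inl hA))
  · -- antisymmetry
    intro x y hx hy hxy hyx
    obtain ⟨hd1, hs1⟩ := hxy
    obtain ⟨hd2, hs2⟩ := hyx
    have h2 : x.2 = y.2 := le_antisymm (dle_le hp2 hq hx hy hd1) (dle_le hp2 hq hy hx hd2)
    have hz1 : y.2 - x.2 = 0 := by omega
    have hz2 : x.2 - y.2 = 0 := by omega
    rw [hz1, nadd_zero, carrySet_eq hp2, carrySet_eq hp2, Eset_zero_right hp2,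
      Eset_zero_right hp2] at hs1
    rw [hz2, nadd_zero, carrySet_eq hp2, carrySet_eq hp2, Eset_zero_right hp2,
      Eset_zero_right hp2] at hs2
    simp only [Finset.union_empty] at hs1 hs2
    exact Prod.ext (Finset.Subset.antisymm hs1 hs2) h2
  · -- the multiset identity
    intro e₁ e₂ e₃ e₄ e₅ h1 h2 h3 h4 h5 h24 h35
    rw [carrySet_eq hp2] at h24 h35
    simp only [carrySet_eq hp2]
    exact master hp2 hq h1 h2 h3 h4 h5 h24 h35
end

section
/- Let γ ∈ Ñ with r − 2γ ≠ q − 1, and let I' ⊊ I be (r−2γ)-admissible subsets of ℤ/fℤ. Then there exists j ∈ I ∖ I' such that I' ∪ {j} is also (r−2γ)-admissible. -/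
/-- `s`-admissibility of a subset `J ⊆ ℤ/fℤ` (for `s ∉ {0, q−1}`): for all `i`,
(`s_i = 0` and `i−1 ∈ J`) implies `i ∈ J`, and (`s_i = p−1` and `i ∈ J`) implies
`i−1 ∈ J`. -/
def admis (p f s : ℕ) (J : Finset (ZMod f)) : Prop :=
  ∀ i : ZMod f,
    (digitZ p f s i = 0 → i - 1 ∈ J → i ∈ J) ∧
    (digitZ p f s i = p - 1 → i ∈ J → i - 1 ∈ J)

open scoped Classical in
/-- The set of lengths `k ∈ [1,f]` such that `d (j+1) = ⋯ = d (j+k) = c`. -/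
noncomputable def chainSet (f : ℕ) (d : ZMod f → ℕ) (c : ℕ) (j : ZMod f) : Finset ℕ :=
  (Finset.Icc 1 f).filter (fun k => ∀ t ∈ Finset.Icc 1 k, d (j + (t : ZMod f)) = c)

lemma mem_chainSet {f : ℕ} {d : ZMod f → ℕ} {c : ℕ} {j : ZMod f} {k : ℕ} :
    k ∈ chainSet f d c j ↔
      (1 ≤ k ∧ k ≤ f) ∧ ∀ t ∈ Finset.Icc 1 k, d (j + (t : ZMod f)) = c := by
  simp [chainSet]

lemma one_mem_chainSet {f : ℕ} [NeZero f] (d : ZMod f → ℕ) (c : ℕ) (j : ZMod f)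
    (hj : d (j + 1) = c) : 1 ∈ chainSet f d c j := by
  refine mem_chainSet.2 ⟨⟨le_refl 1, Nat.one_le_iff_ne_zero.2 (NeZero.ne f)⟩, ?_⟩
  intro t ht
  have ht1 : t = 1 := by have := Finset.mem_Icc.1 ht; omega
  subst ht1
  simpa using hj

lemma chainSet_eq_empty {f : ℕ} (d : ZMod f → ℕ) (c : ℕ) (j : ZMod f)
    (hj : d (j + 1) ≠ c) : chainSet f d c j = ∅ := by
  ext k
  simp only [mem_chainSet, Finset.notMem_empty, iff_false]
  rintro ⟨⟨h1, h2⟩, h3⟩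
  exact hj (by simpa using h3 1 (Finset.mem_Icc.2 ⟨le_refl 1, h1⟩))

lemma chainSet_card_succ {f : ℕ} [NeZero f] (d : ZMod f → ℕ) (c : ℕ) (j : ZMod f)
    (hnot : ¬ ∀ i : ZMod f, d i = c) (hj : d (j + 1) = c) :
    (chainSet f d c (j + 1)).card + 1 ≤ (chainSet f d c j).card := by
  classical
  have hstep : ∀ k ∈ chainSet f d c (j + 1), k + 1 ∈ chainSet f d c j := by
    intro k hk
    obtain ⟨⟨hk1a, hk1b⟩, hk2⟩ := mem_chainSet.1 hk
    -- k ≠ f, otherwise all values of d are c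
    have hkf : k ≠ f := by
      intro hkeq
      apply hnot
      intro i
      by_cases h0 : i = j + 1
      · rw [h0]; exact hj
      · have hval : (i - (j + 1)).val ≠ 0 := by
          intro hv
          exact h0 (by have := (ZMod.val_eq_zero _).mp hv; rwa [sub_eq_zero] at this)
        have hv1 : 1 ≤ (i - (j + 1)).val := Nat.one_le_iff_ne_zero.2 hval
        have hv2 : (i - (j + 1)).val ≤ k := by
          rw [hkeq]; exact le_of_lt (ZMod.val_lt _)
        have := hk2 (i - (j + 1)).val (Finset.mem_Icc.2 ⟨hv1, hv2⟩)
        rwa [ZMod.natCast_val, ZMod.cast_id', id_eq, add_sub_cancel] at this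
    refine mem_chainSet.2 ⟨⟨by omega, by omega⟩, ?_⟩
    intro t ht
    obtain ⟨ht1, ht2⟩ := Finset.mem_Icc.1 ht
    rcases Nat.eq_or_lt_of_le ht1 with h1 | h1
    · rw [← h1]; simpa using hj
    · have ht' : t - 1 ∈ Finset.Icc 1 k := Finset.mem_Icc.2 ⟨by omega, by omega⟩
      have := hk2 (t - 1) ht'
      have hcast : j + (t : ZMod f) = j + 1 + ((t - 1 : ℕ) : ZMod f) := by
        have h2 : ((t - 1 : ℕ) : ZMod f) + 1 = (t : ZMod f) := by
          have h3 : (t - 1) + 1 = t := by omega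
          rw [← h3]; push_cast; ring
        rw [← h2]; ring
      rwa [← hcast] at this
  have hsub : insert 1 ((chainSet f d c (j + 1)).image (· + 1)) ⊆ chainSet f d c j := by
    intro x hx
    rcases Finset.mem_insert.1 hx with h | h
    · subst h; exact one_mem_chainSet d c j hj
    · obtain ⟨k, hk, rfl⟩ := Finset.mem_image.1 h
      exact hstep k hk
  have hcard := Finset.card_le_card hsub
  rw [Finset.card_insert_of_notMem (by
    intro h
    obtain ⟨k, hkk, hk⟩ := Finset.mem_image.1 h
    have := (mem_chainSet.1 hkk).1.1
    omega)] at hcard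
  rwa [Finset.card_image_of_injective _ (fun a b h => by omega)] at hcard

lemma not_all_digit_zero {p f s : ℕ} [NeZero f] (hp : 2 ≤ p) (hs1 : 1 ≤ s) (hsf : s < p ^ f) :
    ¬ ∀ i : ZMod f, digitZ p f s i = 0 := by
  intro hall
  have hf : 0 < f := Nat.pos_of_ne_zero (NeZero.ne f)
  have key : ∀ m, m ≤ f → p ^ m ∣ s := by
    intro m
    induction m with
    | zero => intro _; simp
    | succ n ih =>
      intro h
      have hdvd := ih (by omega)
      have hd : s / p ^ n % p = 0 := by
        have := hall ((n : ZMod f))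
        rwa [digitZ, ZMod.val_cast_of_lt (by omega)] at this
      obtain ⟨a, ha⟩ := hdvd
      have hppos : 0 < p ^ n := Nat.pow_pos (by omega)
      have hsa : s / p ^ n = a := by rw [ha, Nat.mul_div_cancel_left a hppos]
      rw [hsa] at hd
      obtain ⟨b, hb⟩ := Nat.dvd_of_mod_eq_zero hd
      exact ⟨b, by rw [ha, hb, pow_succ]; ring⟩
  have := Nat.le_of_dvd (by omega) (key f le_rfl)
  omega

lemma step_pm {P p s : ℕ} (hP : 0 < P) (hp : 2 ≤ p) (hdvd : P ∣ s + 1)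
    (hd : s / P % p = p - 1) : P * p ∣ s + 1 := by
  obtain ⟨c, hc⟩ := hdvd
  have hc1 : 1 ≤ c := by
    rcases Nat.eq_zero_or_pos c with h | h
    · rw [h, mul_zero] at hc; omega
    · exact h
  obtain ⟨d, hdn⟩ : ∃ d, c = d + 1 := ⟨c - 1, by omega⟩
  have hs : s = P * d + (P - 1) := by
    have h2 : P * c = P * d + P := by rw [hdn]; ring
    omega
  have hdiv : s / P = d := by
    rw [hs, Nat.mul_add_div hP]
    have h3 : (P - 1) / P = 0 := Nat.div_eq_of_lt (by omega)
    omega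
  rw [hdiv] at hd
  have hdm := Nat.div_add_mod d p
  have hpd : p ∣ d + 1 := ⟨d / p + 1, by rw [Nat.mul_add, mul_one]; omega⟩
  obtain ⟨e, he⟩ := hpd
  exact ⟨e, by rw [hc, hdn, he]; ring⟩

lemma not_all_digit_pm {p f s : ℕ} [NeZero f] (hp : 2 ≤ p) (hsf : s + 1 < p ^ f) :
    ¬ ∀ i : ZMod f, digitZ p f s i = p - 1 := by
  intro hall
  have hf : 0 < f := Nat.pos_of_ne_zero (NeZero.ne f)
  have key : ∀ m, m ≤ f → p ^ m ∣ s + 1 := by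
    intro m
    induction m with
    | zero => intro _; simp
    | succ n ih =>
      intro h
      have hdvd := ih (by omega)
      have hd : s / p ^ n % p = p - 1 := by
        have := hall ((n : ZMod f))
        rwa [digitZ, ZMod.val_cast_of_lt (by omega)] at this
      have hppos : 0 < p ^ n := Nat.pow_pos (by omega)
      have := step_pm hppos hp hdvd hd
      rwa [← pow_succ] at this
  have := Nat.le_of_dvd (by omega) (key f le_rfl)
  omega

/-- The potential function: total length of zero-chain forward plus `(p-1)`-chain backward. -/
noncomputable def muPot (p f s : ℕ) (j : ZMod f) : ℕ :=
  (chainSet f (digitZ p f s) 0 j).card +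
  (chainSet f (fun i => digitZ p f s (1 - i)) (p - 1) (-j)).card

lemma muPot_succ_lt {p f s : ℕ} [NeZero f] (hp : 2 ≤ p)
    (hnot0 : ¬ ∀ i : ZMod f, digitZ p f s i = 0) (j : ZMod f)
    (h0 : digitZ p f s (j + 1) = 0) : muPot p f s (j + 1) < muPot p f s j := by
  unfold muPot
  have hA := chainSet_card_succ (digitZ p f s) 0 j hnot0 h0
  have hB : chainSet f (fun i => digitZ p f s (1 - i)) (p - 1) (-(j + 1)) = ∅ := by
    apply chainSet_eq_empty
    have h1 : -(j + 1) + 1 = -j := by ring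
    rw [h1]
    show digitZ p f s (1 - -j) ≠ p - 1
    have h2 : (1 : ZMod f) - -j = j + 1 := by ring
    rw [h2, h0]
    omega
  rw [hB, Finset.card_empty]
  omega

lemma muPot_pred_lt {p f s : ℕ} [NeZero f] (hp : 2 ≤ p)
    (hnotpm : ¬ ∀ i : ZMod f, digitZ p f s i = p - 1) (j : ZMod f)
    (hpm : digitZ p f s j = p - 1) : muPot p f s (j - 1) < muPot p f s j := by
  unfold muPot
  have hnotpm' : ¬ ∀ i : ZMod f, (fun i => digitZ p f s (1 - i)) i = p - 1 := by
    intro hh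
    apply hnotpm
    intro i
    have := hh (1 - i)
    simpa using this
  have hd : (fun i => digitZ p f s (1 - i)) (-j + 1) = p - 1 := by
    show digitZ p f s (1 - (-j + 1)) = p - 1
    have h1 : (1 : ZMod f) - (-j + 1) = j := by ring
    rw [h1]; exact hpm
  have hB := chainSet_card_succ (fun i => digitZ p f s (1 - i)) (p - 1) (-j) hnotpm' hd
  have hA : chainSet f (digitZ p f s) 0 (j - 1) = ∅ := by
    apply chainSet_eq_empty
    rw [sub_add_cancel, hpm]
    omega
  have hneg : -(j - 1) = -j + 1 := by ring
  rw [hA, Finset.card_empty, hneg]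
  omega

/-- Saturated chains of admissible sets: if `s := r − 2γ ≠ q − 1` (so `s` has canonical
representative `1 ≤ s < q−1`) and `J' ⊊ J` are `s`-admissible subsets of `ℤ/fℤ`, then
there is `j ∈ J ∖ J'` with `J' ∪ {j}` again `s`-admissible. -/
theorem stmt_14 (p f q s : ℕ) (hp : p.Prime) (hodd : Odd p) [NeZero f] (hq : q = p ^ f)
    (hs1 : 1 ≤ s) (hs2 : s < q - 1)
    (J' J : Finset (ZMod f)) (hss : J' ⊂ J)
    (h1 : admis p f s J') (h2 : admis p f s J) :
    ∃ j ∈ J \ J', admis p f s (insert j J') := by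
  classical
  have hp2 : 2 ≤ p := hp.two_le
  have hq2 : 2 ≤ q := by
    rw [hq]
    calc 2 ≤ p := hp2
    _ = p ^ 1 := (pow_one p).symm
    _ ≤ p ^ f := Nat.pow_le_pow_right (by omega) (Nat.one_le_iff_ne_zero.2 (NeZero.ne f))
  have hsf : s < p ^ f := by omega
  have hsf1 : s + 1 < p ^ f := by omega
  have hnot0 : ¬ ∀ i : ZMod f, digitZ p f s i = 0 := not_all_digit_zero hp2 hs1 hsf
  have hnotpm : ¬ ∀ i : ZMod f, digitZ p f s i = p - 1 := not_all_digit_pm hp2 hsf1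
  have hne : (J \ J').Nonempty := by
    obtain ⟨x, hx1, hx2⟩ := Finset.exists_of_ssubset hss
    exact ⟨x, Finset.mem_sdiff.2 ⟨hx1, hx2⟩⟩
  obtain ⟨j, hjmem, hjmin⟩ := Finset.exists_min_image (J \ J') (muPot p f s) hne
  obtain ⟨hjJ, hjJ'⟩ := Finset.mem_sdiff.1 hjmem
  refine ⟨j, hjmem, ?_⟩
  intro i
  constructor
  · intro h0 hmem
    rcases Finset.mem_insert.1 hmem with h | h
    · -- i - 1 = j, so i = j + 1
      have hi : i = j + 1 := by rw [← h]; ring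
      subst hi
      have hiJ : j + 1 ∈ J := (h2 (j + 1)).1 h0 (by rwa [add_sub_cancel_right])
      by_contra hins
      have hins' : j + 1 ∉ J' := fun hh => hins (Finset.mem_insert_of_mem hh)
      have hmem2 : j + 1 ∈ J \ J' := Finset.mem_sdiff.2 ⟨hiJ, hins'⟩
      have hle := hjmin _ hmem2
      have := muPot_succ_lt hp2 hnot0 j h0
      omega
    · exact Finset.mem_insert_of_mem ((h1 i).1 h0 h)
  · intro hpm hmem
    rcases Finset.mem_insert.1 hmem with h | h
    · subst h
      have hiJ : i - 1 ∈ J := (h2 i).2 hpm hjJ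
      by_contra hins
      have hins' : i - 1 ∉ J' := fun hh => hins (Finset.mem_insert_of_mem hh)
      have hmem2 : i - 1 ∈ J \ J' := Finset.mem_sdiff.2 ⟨hiJ, hins'⟩
      have hle := hjmin _ hmem2
      have := muPot_pred_lt hp2 hnotpm i hpm
      omega
    · exact Finset.mem_insert_of_mem ((h1 i).2 hpm h)
end

section
/- Let Θ̃_1 = {(J,I) : I,J ⊆ ℤ/fℤ, J ∩ (I−1) = ∅}, with partial order (J',I') ⊑ (J,I) iff I' ⊆ I and J' ⊆ J ∪ ((I∖I')−1). Then ⊑ is a partial order on Θ̃_1, (∅, ℤ/fℤ) is its unique maximal element, (∅,∅) its unique minimal element, and ⊑ is generated by the covering relations (J∖{j}, I) ⊏ (J,I) for j ∈ J and (J∪{i−1}, I∖{i}) ⊏ (J,I) for i ∈ I. -/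
/-- The shift `I − 1 = {i − 1 : i ∈ I}` of a subset of `ℤ/fℤ`. -/
def shiftDown (f : ℕ) (I : Finset (ZMod f)) : Finset (ZMod f) := I.image (· - 1)

/-- Membership in `Θ̃₁ = {(J, I) : J ∩ (I−1) = ∅}`. -/
def inTheta (f : ℕ) (x : Finset (ZMod f) × Finset (ZMod f)) : Prop :=
  x.1 ∩ shiftDown f x.2 = ∅

/-- The order `⊑` on `Θ̃₁`: `(J',I') ⊑ (J,I)` iff `I' ⊆ I` and
`J' ⊆ J ∪ ((I ∖ I') − 1)`. -/
def sqle (f : ℕ) (x y : Finset (ZMod f) × Finset (ZMod f)) : Prop :=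
  x.2 ⊆ y.2 ∧ x.1 ⊆ y.1 ∪ shiftDown f (y.2 \ x.2)

/-- The covering moves: `(J∖{j}, I) ⊏ (J, I)` for `j ∈ J`, and
`(J ∪ {i−1}, I∖{i}) ⊏ (J, I)` for `i ∈ I`. -/
def coverStep (f : ℕ) (x y : Finset (ZMod f) × Finset (ZMod f)) : Prop :=
  (∃ j ∈ y.1, x = (y.1.erase j, y.2)) ∨ (∃ i ∈ y.2, x = (insert (i - 1) y.1, y.2.erase i))

lemma mem_shiftDown {f : ℕ} {I : Finset (ZMod f)} {a : ZMod f} :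
    a ∈ shiftDown f I ↔ a + 1 ∈ I := by
  simp only [shiftDown, Finset.mem_image]
  constructor
  · rintro ⟨i, hi, rfl⟩; simpa using hi
  · intro h; exact ⟨a + 1, h, by ring⟩

lemma shiftDown_empty (f : ℕ) : shiftDown f ∅ = ∅ := rfl

lemma sqle_refl (f : ℕ) (x : Finset (ZMod f) × Finset (ZMod f)) : sqle f x x := by
  refine ⟨le_refl _, ?_⟩
  simp [shiftDown_empty]

lemma sqle_trans (f : ℕ) (x y z : Finset (ZMod f) × Finset (ZMod f))
    (hxy : sqle f x y) (hyz : sqle f y z) : sqle f x z := by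
  refine ⟨hxy.1.trans hyz.1, ?_⟩
  intro a ha
  rcases Finset.mem_union.mp (hxy.2 ha) with h | h
  · rcases Finset.mem_union.mp (hyz.2 h) with h' | h'
    · exact Finset.mem_union_left _ h'
    · refine Finset.mem_union_right _ ?_
      rw [mem_shiftDown] at h' ⊢
      rw [Finset.mem_sdiff] at h' ⊢
      exact ⟨h'.1, fun hx => h'.2 (hxy.1 hx)⟩
  · refine Finset.mem_union_right _ ?_
    rw [mem_shiftDown] at h ⊢
    rw [Finset.mem_sdiff] at h ⊢
    exact ⟨hyz.1 h.1, h.2⟩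

lemma coverStep_sqle (f : ℕ) (x y : Finset (ZMod f) × Finset (ZMod f))
    (h : coverStep f x y) : sqle f x y := by
  rcases h with ⟨j, hj, rfl⟩ | ⟨i, hi, rfl⟩
  · exact ⟨le_refl _, (Finset.erase_subset _ _).trans Finset.subset_union_left⟩
  · refine ⟨Finset.erase_subset _ _, ?_⟩
    rw [Finset.insert_subset_iff]
    constructor
    · refine Finset.mem_union_right _ ?_
      rw [mem_shiftDown, Finset.mem_sdiff]
      have hii : i - 1 + 1 = i := by ring
      rw [hii]
      exact ⟨hi, Finset.notMem_erase _ _⟩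
    · exact Finset.subset_union_left

lemma eraseChain (f : ℕ) (I : Finset (ZMod f)) :
    ∀ (B A : Finset (ZMod f)), A ⊆ B → Relation.ReflTransGen (coverStep f) (A, I) (B, I) := by
  intro B
  induction B using Finset.strongInduction with
  | _ B ih =>
    intro A hAB
    by_cases hEq : A = B
    · subst hEq; exact Relation.ReflTransGen.refl
    · obtain ⟨j, hjB, hjA⟩ := Finset.exists_of_ssubset (hAB.ssubset_of_ne hEq)
      have hsub : A ⊆ B.erase j :=
        fun a ha => Finset.mem_erase.mpr ⟨fun h => hjA (h ▸ ha), hAB ha⟩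
      have h1 := ih (B.erase j) (Finset.erase_ssubset hjB) A hsub
      exact h1.tail (Or.inl ⟨j, hjB, rfl⟩)

lemma removeChain (f : ℕ) (J I : Finset (ZMod f)) :
    ∀ S, S ⊆ I → Relation.ReflTransGen (coverStep f) (J ∪ shiftDown f S, I \ S) (J, I) := by
  intro S
  induction S using Finset.induction_on with
  | empty =>
    intro _
    rw [shiftDown_empty, Finset.union_empty, Finset.sdiff_empty]
  | @insert i S hiS ih =>
    intro hsub
    have hiI : i ∈ I := hsub (Finset.mem_insert_self _ _)
    have hS : S ⊆ I := (Finset.subset_insert _ _).trans hsub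
    have step : coverStep f (J ∪ shiftDown f (insert i S), I \ insert i S)
        (J ∪ shiftDown f S, I \ S) := by
      refine Or.inr ⟨i, Finset.mem_sdiff.mpr ⟨hiI, hiS⟩, ?_⟩
      have h1 : shiftDown f (insert i S) = insert (i - 1) (shiftDown f S) := by
        simp [shiftDown, Finset.image_insert]
      rw [h1, Finset.union_insert, Finset.sdiff_insert]
    exact Relation.ReflTransGen.head step (ih hS)

lemma sqle_to_chain (f : ℕ) (x y : Finset (ZMod f) × Finset (ZMod f))
    (h : sqle f x y) : Relation.ReflTransGen (coverStep f) x y := by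
  obtain ⟨J', I'⟩ := x
  obtain ⟨J, I⟩ := y
  obtain ⟨hI, hJ⟩ := h
  have hS : I \ (I \ I') = I' := by
    rw [Finset.sdiff_sdiff_self_left, Finset.inter_eq_right.mpr hI]
  have h1 : Relation.ReflTransGen (coverStep f) (J', I') (J ∪ shiftDown f (I \ I'), I') :=
    eraseChain f I' _ J' hJ
  have h2 := removeChain f J I (I \ I') (Finset.sdiff_subset)
  rw [hS] at h2
  exact h1.trans h2

/-- `⊑` is a partial order on `Θ̃₁`, with unique maximal element `(∅, ℤ/fℤ)` and unique
minimal element `(∅, ∅)`, and it is generated by the covering relations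
`(J∖{j}, I) ⊏ (J,I)` (`j ∈ J`) and `(J∪{i−1}, I∖{i}) ⊏ (J,I)` (`i ∈ I`). -/
theorem stmt_15 (f : ℕ) [NeZero f] :
    (∀ x, inTheta f x → sqle f x x) ∧
    (∀ x y z, inTheta f x → inTheta f y → inTheta f z →
      sqle f x y → sqle f y z → sqle f x z) ∧
    (∀ x y, inTheta f x → inTheta f y → sqle f x y → sqle f y x → x = y) ∧
    inTheta f (∅, Finset.univ) ∧
    (∀ x, inTheta f x → sqle f x (∅, Finset.univ)) ∧
    inTheta f (∅, ∅) ∧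
    (∀ x, inTheta f x → sqle f (∅, ∅) x) ∧
    (∀ x y, inTheta f x → inTheta f y →
      (sqle f x y ↔ Relation.ReflTransGen (coverStep f) x y)) := by
  refine ⟨fun x _ => sqle_refl f x,
    fun x y z _ _ _ hxy hyz => sqle_trans f x y z hxy hyz,
    ?_, ?_, ?_, ?_, ?_, ?_⟩
  · -- antisymmetry
    intro x y _ _ hxy hyx
    have h2 : x.2 = y.2 := Finset.Subset.antisymm hxy.1 hyx.1
    have hx1 : x.1 ⊆ y.1 := by
      have := hxy.2
      rw [h2, Finset.sdiff_self] at this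
      simpa [shiftDown_empty] using this
    have hy1 : y.1 ⊆ x.1 := by
      have := hyx.2
      rw [h2, Finset.sdiff_self] at this
      simpa [shiftDown_empty] using this
    exact Prod.ext (Finset.Subset.antisymm hx1 hy1) h2
  · -- inTheta (∅, univ)
    simp [inTheta]
  · -- maximal
    intro x hx
    refine ⟨Finset.subset_univ _, ?_⟩
    intro a ha
    refine Finset.mem_union_right _ ?_
    rw [mem_shiftDown, Finset.mem_sdiff]
    refine ⟨Finset.mem_univ _, fun hmem => ?_⟩
    have : a ∈ x.1 ∩ shiftDown f x.2 :=
      Finset.mem_inter.mpr ⟨ha, mem_shiftDown.mpr hmem⟩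
    rw [hx] at this
    exact absurd this (Finset.notMem_empty _)
  · -- inTheta (∅, ∅)
    simp [inTheta]
  · -- minimal
    intro x _
    exact ⟨Finset.empty_subset _, Finset.empty_subset _⟩
  · -- generation
    intro x y _ hy
    clear hy
    constructor
    · exact sqle_to_chain f x y
    · intro h
      induction h with
      | refl => exact sqle_refl f x
      | tail _ hstep ih => exact sqle_trans f _ _ _ ih (coverStep_sqle f _ _ hstep)
end

section
/- For a ring R that is an algebra over an infinite field E, an R-module M has only finitely many submodules if and only if for every submodule N ⊆ M the socle of M/N is multiplicity-free (no irreducible occurs twice in soc(M/N)). -/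
/-- Multiplicity-free socle condition: no two distinct simple submodules are isomorphic. -/
def JCMFree (R : Type) [Ring R] (X : Type) [AddCommGroup X] [Module R X] : Prop :=
  ∀ S₁ S₂ : Submodule R X, IsSimpleModule R S₁ → IsSimpleModule R S₂ → S₁ ≠ S₂ →
    IsEmpty (S₁ ≃ₗ[R] S₂)

/-- The condition in the theorem: every quotient is multiplicity-free. -/
def JCMFreeQ (R : Type) [Ring R] (X : Type) [AddCommGroup X] [Module R X] : Prop :=
  ∀ N : Submodule R X, JCMFree R (X ⧸ N)

theorem JCMFree.of_injective {R X Y : Type} [Ring R] [AddCommGroup X] [Module R X]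
    [AddCommGroup Y] [Module R Y] (hY : JCMFree R Y) (f : X →ₗ[R] Y)
    (hf : Function.Injective f) : JCMFree R X := by
  intro S₁ S₂ h₁ h₂ hne
  constructor
  intro e
  have e₁ := Submodule.equivMapOfInjective f hf S₁
  have e₂ := Submodule.equivMapOfInjective f hf S₂
  have h₁' : IsSimpleModule R (S₁.map f) := IsSimpleModule.congr e₁.symm
  have h₂' : IsSimpleModule R (S₂.map f) := IsSimpleModule.congr e₂.symm
  have hne' : S₁.map f ≠ S₂.map f := fun h => hne (Submodule.map_injective_of_injective hf h)
  exact (hY _ _ h₁' h₂' hne').false ((e₁.symm.trans e).trans e₂)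

theorem JCMFreeQ.self {R X : Type} [Ring R] [AddCommGroup X] [Module R X]
    (h : JCMFreeQ R X) : JCMFree R X :=
  (h ⊥).of_injective ((⊥ : Submodule R X).quotEquivOfEqBot rfl).symm.toLinearMap
    ((⊥ : Submodule R X).quotEquivOfEqBot rfl).symm.injective

theorem JCMFreeQ.quotient {R X : Type} [Ring R] [AddCommGroup X] [Module R X]
    (h : JCMFreeQ R X) (A : Submodule R X) : JCMFreeQ R (X ⧸ A) := by
  intro N'
  have hAT : A ≤ N'.comap A.mkQ := by
    intro x hx
    simp only [Submodule.mem_comap, Submodule.mkQ_apply]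
    rw [Submodule.Quotient.mk_eq_zero A |>.mpr hx]
    exact N'.zero_mem
  have e := Submodule.quotientQuotientEquivQuotient A (N'.comap A.mkQ) hAT
  have hT : (N'.comap A.mkQ).map A.mkQ = N' :=
    Submodule.map_comap_eq_of_surjective (Submodule.mkQ_surjective A) N'
  rw [← hT]
  exact (h (N'.comap A.mkQ)).of_injective e.toLinearMap e.injective

/-- If `C ⊓ A = ⊥`, then `C` is isomorphic to its image in `X ⧸ A`. -/
noncomputable def jcMapMkQEquiv {R X : Type} [Ring R] [AddCommGroup X] [Module R X]
    {A C : Submodule R X} (hdisj : C ⊓ A = ⊥) : C ≃ₗ[R] (C.map A.mkQ) := by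
  have hr : LinearMap.range (A.mkQ ∘ₗ C.subtype) = C.map A.mkQ := by
    rw [LinearMap.range_comp, Submodule.range_subtype]
  have hinj : Function.Injective (A.mkQ ∘ₗ C.subtype) := by
    rw [← LinearMap.ker_eq_bot, LinearMap.ker_comp, Submodule.ker_mkQ]
    rw [eq_bot_iff]
    intro x hx
    have : (x : X) ∈ C ⊓ A := ⟨x.2, hx⟩
    rw [hdisj] at this
    simpa [Submodule.mem_bot] using Subtype.ext (by simpa using this)
  exact (LinearEquiv.ofInjective _ hinj).trans (LinearEquiv.ofEq _ _ hr)

theorem jcMapMkQ_isAtom {R X : Type} [Ring R] [AddCommGroup X] [Module R X]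
    {A C : Submodule R X} (hC : IsAtom C) (hdisj : C ⊓ A = ⊥) : IsAtom (C.map A.mkQ) := by
  rw [← isSimpleModule_iff_isAtom] at hC ⊢
  exact IsSimpleModule.congr (jcMapMkQEquiv hdisj).symm

/-- Key lemma: under the multiplicity-free condition, an atom below a finite sup
of atoms is one of them. -/
theorem jc_atom_mem {R : Type} [Ring R] : ∀ (n : ℕ) (X : Type) (_ : AddCommGroup X)
    (_ : Module R X), JCMFreeQ R X →
    ∀ t : Finset (Submodule R X), t.card ≤ n → (∀ A ∈ t, IsAtom A) →
    ∀ C : Submodule R X, IsAtom C → C ≤ t.sup id → C ∈ t := by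
  intro n
  induction n with
  | zero =>
    intro X _ _ _ t ht _ C hC hle
    rw [Finset.card_eq_zero.mp (Nat.le_zero.mp ht)] at hle ⊢
    simp only [Finset.sup_empty, le_bot_iff] at hle
    exact absurd hle hC.1
  | succ n ih =>
    intro X _ _ hP t ht hatoms C hC hle
    classical
    rcases t.eq_empty_or_nonempty with rfl | ⟨A, hA⟩
    · simp only [Finset.sup_empty, le_bot_iff] at hle
      exact absurd hle hC.1
    set t' := t.erase A with ht'
    have htA : t = insert A t' := (Finset.insert_erase hA).symm
    by_cases hCA : C = A
    · exact hCA ▸ hA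
    have hAatom := hatoms A hA
    have hdisj : C ⊓ A = ⊥ := (hC.disjoint_of_ne hAatom hCA).eq_bot
    -- push everything to X ⧸ A
    set q := A.mkQ with hq
    have hmapsup : Submodule.map q (t'.sup id) = t'.sup (fun B => Submodule.map q B) := by
      have := Finset.comp_sup_eq_sup_comp (s := t') (f := id) (Submodule.map q)
        (fun x y => Submodule.map_sup x y q) (Submodule.map_bot q)
      simpa using this
    have hCle : Submodule.map q C ≤ (t'.image (Submodule.map q)).sup id := by
      rw [Finset.sup_image]
      have h1 : C ≤ A ⊔ t'.sup id := by
        rw [htA, Finset.sup_insert] at hle; simpa using hle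
      have h2 := Submodule.map_mono (f := q) h1
      rw [Submodule.map_sup, hmapsup] at h2
      have h3 : Submodule.map q A = ⊥ := by
        rw [eq_bot_iff]; rintro x ⟨a, ha, rfl⟩
        simpa [hq] using (Submodule.Quotient.mk_eq_zero A).mpr ha
      rw [h3, bot_sup_eq] at h2
      simpa using h2
    have hatoms' : ∀ B ∈ t'.image (Submodule.map q), IsAtom B := by
      intro B hB
      obtain ⟨B₀, hB₀, rfl⟩ := Finset.mem_image.mp hB
      have hB₀A : B₀ ≠ A := Finset.ne_of_mem_erase hB₀
      exact jcMapMkQ_isAtom (hatoms B₀ (Finset.mem_of_mem_erase hB₀))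
        (((hatoms B₀ (Finset.mem_of_mem_erase hB₀)).disjoint_of_ne hAatom hB₀A).eq_bot)
    have hcard : (t'.image (Submodule.map q)).card ≤ n := by
      calc (t'.image (Submodule.map q)).card ≤ t'.card := Finset.card_image_le
        _ = t.card - 1 := by rw [ht', Finset.card_erase_of_mem hA]
        _ ≤ n := by omega
    have hmem := ih (X ⧸ A) inferInstance inferInstance (hP.quotient A)
      (t'.image (Submodule.map q)) hcard hatoms'
      (Submodule.map q C) (jcMapMkQ_isAtom hC hdisj) hCle
    obtain ⟨B, hB, hBC⟩ := Finset.mem_image.mp hmem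
    -- C ≅ map q C = map q B ≅ B
    have hBA : B ≠ A := Finset.ne_of_mem_erase hB
    have hBdisj : B ⊓ A = ⊥ :=
      ((hatoms B (Finset.mem_of_mem_erase hB)).disjoint_of_ne hAatom hBA).eq_bot
    by_cases hCB : C = B
    · exact hCB ▸ Finset.mem_of_mem_erase hB
    exfalso
    have e : C ≃ₗ[R] B :=
      ((jcMapMkQEquiv hdisj).trans (LinearEquiv.ofEq _ _ hBC.symm)).trans
        (jcMapMkQEquiv hBdisj).symm
    exact (hP.self C B (isSimpleModule_iff_isAtom.mpr hC)
      (isSimpleModule_iff_isAtom.mpr (hatoms B (Finset.mem_of_mem_erase hB))) hCB).false e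

theorem jc_atoms_finite {R X : Type} [Ring R] [AddCommGroup X] [Module R X]
    [IsNoetherian R X] (hP : JCMFreeQ R X) :
    {A : Submodule R X | IsAtom A}.Finite := by
  obtain ⟨t, hts, hsup⟩ :=
    (CompleteLattice.WellFoundedGT.isSupFiniteCompact (Submodule R X))
      {A : Submodule R X | IsAtom A}
  refine t.finite_toSet.subset fun C hC => ?_
  exact jc_atom_mem t.card X inferInstance inferInstance hP t le_rfl
    (fun A hA => hts hA) C hC (hsup ▸ le_sSup hC)

theorem jc_covers_finite {R X : Type} [Ring R] [AddCommGroup X] [Module R X]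
    [IsNoetherian R X] (hP : JCMFreeQ R X) (N : Submodule R X) :
    {N' : Submodule R X | N ⋖ N'}.Finite := by
  have hatoms : {A : Submodule R (X ⧸ N) | IsAtom A}.Finite := jc_atoms_finite (hP.quotient N)
  refine Set.Finite.of_finite_image (f := Submodule.map N.mkQ) (hatoms.subset ?_) ?_
  · rintro _ ⟨N', hN', rfl⟩
    -- IsAtom (map mkQ N')
    constructor
    · intro hbot
      have : N' ≤ N := by
        intro x hx
        have : N.mkQ x ∈ Submodule.map N.mkQ N' := Submodule.mem_map_of_mem hx
        rw [hbot] at this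
        simpa [Submodule.Quotient.mk_eq_zero] using this
      exact absurd (le_antisymm this hN'.1.le) (ne_of_gt hN'.1)
    · intro Z hZ
      have hZ' : Submodule.comap N.mkQ Z < N' := by
        have h1 : Submodule.comap N.mkQ Z ≤ Submodule.comap N.mkQ (Submodule.map N.mkQ N') :=
          Submodule.comap_mono hZ.le
        rw [Submodule.comap_map_mkQ, sup_eq_right.mpr hN'.1.le] at h1
        rcases h1.lt_or_eq with h | h
        · exact h
        · exfalso
          apply ne_of_lt hZ
          rw [← h, Submodule.map_comap_eq_of_surjective (Submodule.mkQ_surjective N)]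
      have hNZ : N ≤ Submodule.comap N.mkQ Z := by
        intro x hx
        simp only [Submodule.mem_comap, Submodule.mkQ_apply]
        rw [(Submodule.Quotient.mk_eq_zero N).mpr hx]
        exact Z.zero_mem
      have : Submodule.comap N.mkQ Z = N := by
        by_contra hne
        exact hN'.2 (lt_of_le_of_ne hNZ (Ne.symm hne)) hZ'
      calc Z = Submodule.map N.mkQ (Submodule.comap N.mkQ Z) :=
            (Submodule.map_comap_eq_of_surjective (Submodule.mkQ_surjective N) Z).symm
        _ = ⊥ := by
            rw [this, eq_bot_iff]
            rintro x ⟨a, ha, rfl⟩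
            simpa using (Submodule.Quotient.mk_eq_zero N).mpr ha
  · -- InjOn
    intro N₁ h₁ N₂ h₂ heq
    have : Submodule.comap N.mkQ (Submodule.map N.mkQ N₁)
        = Submodule.comap N.mkQ (Submodule.map N.mkQ N₂) := by rw [heq]
    rwa [Submodule.comap_map_mkQ, Submodule.comap_map_mkQ,
      sup_eq_right.mpr h₁.1.le, sup_eq_right.mpr h₂.1.le] at this

theorem jc_finite_submodules {R X : Type} [Ring R] [AddCommGroup X] [Module R X]
    [IsNoetherian R X] [IsArtinian R X] (hP : JCMFreeQ R X) :
    Finite (Submodule R X) := by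
  suffices h : ∀ N : Submodule R X, {K : Submodule R X | N ≤ K}.Finite by
    rw [← Set.finite_univ_iff]
    exact (h ⊥).subset fun K _ => show ⊥ ≤ K from bot_le
  intro N
  induction N using WellFoundedGT.induction with
  | _ N ih =>
  have hcov := jc_covers_finite hP N
  have hdecomp : {K : Submodule R X | N ≤ K} ⊆
      {N} ∪ ⋃ N' ∈ {N' : Submodule R X | N ⋖ N'}, {K : Submodule R X | N' ≤ K} := by
    intro K hK
    rcases eq_or_lt_of_le (show N ≤ K from hK) with rfl | hlt
    · exact Or.inl rfl
    · right
      obtain ⟨N'', ⟨hN''₁, hN''₂⟩, hmin⟩ := (wellFounded_lt (α := Submodule R X)).has_min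
        {Z | N < Z ∧ Z ≤ K} ⟨K, hlt, le_rfl⟩
      have hcovN : N ⋖ N'' := by
        refine ⟨hN''₁, fun Z hZ₁ hZ₂ => ?_⟩
        exact hmin Z ⟨hZ₁, hZ₂.le.trans hN''₂⟩ hZ₂
      exact Set.mem_biUnion hcovN hN''₂
  refine Set.Finite.subset ?_ hdecomp
  exact (Set.finite_singleton N).union (hcov.biUnion fun N' hN' => ih N' hN'.lt)

/-- Scalar multiplication by a central element (coming from the base field) as a linear map. -/
def jcSmul {E R Y : Type} [Field E] [Ring R] [Algebra E R] [AddCommGroup Y] [Module R Y]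
    (c : E) : Y →ₗ[R] Y where
  toFun y := algebraMap E R c • y
  map_add' x y := smul_add _ x y
  map_smul' r y := by
    simp only [RingHom.id_apply]
    rw [← mul_smul, Algebra.commutes c r, mul_smul]

theorem jc_forward {E R Y : Type} [Field E] [Infinite E] [Ring R] [Algebra E R]
    [AddCommGroup Y] [Module R Y] (hfin : Finite (Submodule R Y)) : JCMFree R Y := by
  intro S₁ S₂ h₁ h₂ hne
  constructor
  intro e
  have hdisj : S₁ ⊓ S₂ = ⊥ :=
    ((isSimpleModule_iff_isAtom.mp h₁).disjoint_of_ne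
      (isSimpleModule_iff_isAtom.mp h₂) hne).eq_bot
  -- the graph submodules
  set g : E → (S₁ →ₗ[R] Y) := fun c =>
    S₁.subtype + (jcSmul c ∘ₗ (S₂.subtype ∘ₗ (e : S₁ →ₗ[R] S₂))) with hg
  have hinj : Function.Injective (fun c => LinearMap.range (g c)) := by
    intro c c' hcc
    by_contra hne'
    have : Nontrivial S₁ := h₁.nontrivial
    obtain ⟨x, hx0⟩ := exists_ne (0 : S₁)
    have hmem : g c x ∈ LinearMap.range (g c') := by
      rw [← show LinearMap.range (g c) = LinearMap.range (g c') from hcc]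
      exact LinearMap.mem_range_self _ x
    obtain ⟨y, hy⟩ := hmem
    have hy' : (y : Y) + algebraMap E R c' • (e y : Y)
        = (x : Y) + algebraMap E R c • (e x : Y) := hy
    have hsub : (x : Y) - (y : Y)
        = algebraMap E R c' • (e y : Y) - algebraMap E R c • (e x : Y) := by
      have h := hy'
      have h2 : (x : Y) - (y : Y) = ((x : Y) + algebraMap E R c • (e x : Y))
          - ((y : Y) + algebraMap E R c • (e x : Y)) := by abel
      rw [h2, ← h]
      abel
    have hmem1 : (x : Y) - (y : Y) ∈ S₁ := sub_mem x.2 y.2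
    have hmem2 : (x : Y) - (y : Y) ∈ S₂ := by
      rw [hsub]
      exact sub_mem (S₂.smul_mem _ (e y).2) (S₂.smul_mem _ (e x).2)
    have hxy : (x : Y) = (y : Y) := by
      have : (x : Y) - (y : Y) ∈ S₁ ⊓ S₂ := ⟨hmem1, hmem2⟩
      rw [hdisj, Submodule.mem_bot, sub_eq_zero] at this
      exact this
    have hyx : y = x := Subtype.ext hxy.symm
    subst hyx
    have hcancel : algebraMap E R c' • (e y : Y) = algebraMap E R c • (e y : Y) :=
      add_left_cancel hy'

    have hzero : algebraMap E R (c' - c) • (e y : Y) = 0 := by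
      rw [map_sub, sub_smul, hcancel, sub_self]
    have hunit : IsUnit (algebraMap E R (c' - c)) :=
      (isUnit_iff_ne_zero.mpr (sub_ne_zero.mpr (Ne.symm hne'))).map (algebraMap E R)
    obtain ⟨u, hu⟩ := hunit
    have h0 : u • (e y : Y) = 0 := by rw [Units.smul_def, hu]; exact hzero
    have : (e y : Y) = 0 := by rwa [smul_eq_zero_iff_eq u] at h0
    have : e y = 0 := Subtype.ext (by simpa using this)
    exact hx0 (by simpa using e.injective (by simpa using this))
  have : Infinite (Submodule R Y) := Infinite.of_injective _ hinj
  exact not_finite (Submodule R Y)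

/-- **Jans–Camillo criterion.**  Let `E` be an infinite field, `R` an `E`-algebra and
`M` an `R`-module of finite length.  Then `M` has only finitely many `R`-submodules if
and only if for every submodule `N ⊆ M` the socle of `M/N` is multiplicity-free, i.e.
no two distinct simple submodules of `M/N` are isomorphic. -/
theorem stmt_17 (E R M : Type) [Field E] [Infinite E] [Ring R] [Algebra E R]
    [AddCommGroup M] [Module R M] (hfl : IsFiniteLength R M) :
    Finite (Submodule R M) ↔
      ∀ N : Submodule R M, ∀ S₁ S₂ : Submodule R (M ⧸ N),
        IsSimpleModule R S₁ → IsSimpleModule R S₂ → S₁ ≠ S₂ →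
          IsEmpty (S₁ ≃ₗ[R] S₂) := by
  constructor
  · intro hfin N S₁ S₂ h₁ h₂ hne
    have hfinQ : Finite (Submodule R (M ⧸ N)) :=
      Finite.of_injective (Submodule.comap N.mkQ)
        (Submodule.comap_injective_of_surjective (Submodule.mkQ_surjective N))
    exact jc_forward (E := E) hfinQ S₁ S₂ h₁ h₂ hne
  · intro h
    obtain ⟨hN, hA⟩ := isFiniteLength_iff_isNoetherian_isArtinian.mp hfl
    exact jc_finite_submodules h
end
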